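/- arXiv:2008.08621 — 3 statements merged into one kernel-verified Lean document; each statement's English description precedes it below -/
import Mathlib

section
/- Let G be a finite simple graph with no even cycles. Then the polynomial g(G,2x) (which equals the γ-polynomial of the h*-polynomial of the symmetric edge polytope of the suspension of G) is the independence polynomial of a finite simple graph; explicitly, g(G,2x) = i(L(G)[K_2], x). In particular, g(G,2x) coincides with the f-polynomial of a flag simplicial complex. -/
open Polynomial

variable {V : Type} [Fintype V] [DecidableEq V]

open scoped Classical

/-- `M` is a matching of `G`: a finset of edges of `G` that pairwise share no vertex. -/
def IsGMatching (G : SimpleGraph V) (M : Finset (Sym2 V)) : Prop :=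
  (M : Set (Sym2 V)) ⊆ G.edgeSet ∧
    (M : Set (Sym2 V)).Pairwise fun e f => ∀ v : V, ¬ (v ∈ e ∧ v ∈ f)

/-- The set of vertices covered by a finset of edges. -/
def edgeVerts (F : Finset (Sym2 V)) : Set V := {v | ∃ e ∈ F, v ∈ e}

/-- `m_k(G)`: the number of `k`-matchings of `G`. -/
noncomputable def mCount (G : SimpleGraph V) (k : ℕ) : ℕ :=
  Nat.card {M : Finset (Sym2 V) // IsGMatching G M ∧ M.card = k}

/-- The matching generating polynomial `g(G,x) = ∑_k m_k(G) x^k` (over `ℝ`). -/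
noncomputable def gPoly (G : SimpleGraph V) : Polynomial ℝ :=
  ∑ k ∈ Finset.range (Fintype.card V + 1), C (mCount G k : ℝ) * X ^ k

open scoped Classical in
/-- The line graph of `G`: vertices are the edges of `G`, two distinct edges adjacent
iff they share a vertex. -/
def lineGraph (G : SimpleGraph V) : SimpleGraph {e : Sym2 V // e ∈ G.edgeSet} where
  Adj e f := e ≠ f ∧ ∃ v : V, v ∈ (e : Sym2 V) ∧ v ∈ (f : Sym2 V)
  symm := by
    refine ⟨?_⟩
    rintro e f ⟨hne, v, hv1, hv2⟩
    exact ⟨hne.symm, v, hv2, hv1⟩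
  loopless := by
    refine ⟨?_⟩
    rintro e ⟨hne, -⟩
    exact hne rfl

/-- `A` is an independent set of the graph `H`. -/
def IsIndepSet {W : Type} (H : SimpleGraph W) (A : Finset W) : Prop :=
  (A : Set W).Pairwise fun a b => ¬ H.Adj a b

/-- `i_k(H)`: the number of independent sets of size `k` in `H`. -/
noncomputable def indepCount {W : Type} (H : SimpleGraph W) (k : ℕ) : ℕ :=
  Nat.card {A : Finset W // IsIndepSet H A ∧ A.card = k}

/-- The independence polynomial `i(H,x) = ∑_k i_k(H) x^k` (over `ℝ`). -/
noncomputable def iPoly {W : Type} [Fintype W] (H : SimpleGraph W) : Polynomial ℝ :=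
  ∑ k ∈ Finset.range (Fintype.card W + 1), C (indepCount H k : ℝ) * X ^ k

/-- The lexicographic product `G[H]`: `(a,x)` adjacent to `(b,y)` iff `a ~ b` in `G`,
or `a = b` and `x ~ y` in `H`. -/
def lexProd {U W : Type} (G : SimpleGraph U) (H : SimpleGraph W) : SimpleGraph (U × W) where
  Adj a b := G.Adj a.1 b.1 ∨ (a.1 = b.1 ∧ H.Adj a.2 b.2)
  symm := by
    refine ⟨?_⟩
    rintro a b (h | ⟨h1, h2⟩)
    · exact Or.inl h.symm
    · exact Or.inr ⟨h1.symm, h2.symm⟩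
  loopless := by
    refine ⟨?_⟩
    rintro a (h | ⟨-, h2⟩)
    · exact G.irrefl h
    · exact H.irrefl h2


private lemma stmt9_fst_inj {G : SimpleGraph V}
    {A : Finset ({e : Sym2 V // e ∈ G.edgeSet} × Fin 2)}
    (hA : IsIndepSet (lexProd (lineGraph G) (⊤ : SimpleGraph (Fin 2))) A)
    {p q : {e : Sym2 V // e ∈ G.edgeSet} × Fin 2} (hp : p ∈ A) (hq : q ∈ A)
    (h : p.1 = q.1) : p = q := by
  by_contra hne
  exact hA (Finset.mem_coe.mpr hp) (Finset.mem_coe.mpr hq) hne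
    (Or.inr ⟨h, fun h2 => hne (Prod.ext h h2)⟩)

private lemma stmt9_image_matching {G : SimpleGraph V}
    {A : Finset ({e : Sym2 V // e ∈ G.edgeSet} × Fin 2)}
    (hA : IsIndepSet (lexProd (lineGraph G) (⊤ : SimpleGraph (Fin 2))) A) :
    IsGMatching G (A.image fun p => p.1.1) ∧ (A.image fun p => p.1.1).card = A.card := by
  refine ⟨⟨?_, ?_⟩, ?_⟩
  · intro e he
    rw [Finset.mem_coe, Finset.mem_image] at he
    obtain ⟨p, hp, rfl⟩ := he
    exact p.1.2
  · intro e he f hf hef v hv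
    rw [Finset.mem_coe, Finset.mem_image] at he hf
    obtain ⟨p, hp, rfl⟩ := he
    obtain ⟨q, hq, rfl⟩ := hf
    have hpq : p ≠ q := fun h => hef (by rw [h])
    have h1 : p.1 ≠ q.1 := fun h => hef (by rw [h])
    exact hA (Finset.mem_coe.mpr hp) (Finset.mem_coe.mpr hq) hpq
      (Or.inl ⟨h1, v, hv.1, hv.2⟩)
  · apply Finset.card_image_of_injOn
    intro p hp q hq h
    exact stmt9_fst_inj hA hp hq (Subtype.ext h)

private lemma stmt9_fiber_card {G : SimpleGraph V} {M : Finset (Sym2 V)} {n : ℕ}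
    (hM : IsGMatching G M) (hn : M.card = n) :
    (Finset.univ.filter
      (fun A : Finset ({e : Sym2 V // e ∈ G.edgeSet} × Fin 2) =>
        (IsIndepSet (lexProd (lineGraph G) (⊤ : SimpleGraph (Fin 2))) A ∧ A.card = n) ∧
          A.image (fun p => p.1.1) = M)).card = 2 ^ n := by
  classical
  set F : (↥M → Fin 2) → Finset ({e : Sym2 V // e ∈ G.edgeSet} × Fin 2) :=
    fun g => M.attach.image (fun e => (⟨e.1, hM.1 (Finset.mem_coe.mpr e.2)⟩, g e)) with hF
  have hFinj : Function.Injective F := by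
    intro g g' h
    funext e
    have hmem : (⟨e.1, hM.1 (Finset.mem_coe.mpr e.2)⟩, g e) ∈ F g' := by
      rw [← h, hF]
      exact Finset.mem_image_of_mem _ (Finset.mem_attach _ _)
    rw [hF] at hmem
    simp only [Finset.mem_image] at hmem
    obtain ⟨f, _, hf⟩ := hmem
    have h1 : f = e := Subtype.ext (congrArg (fun p => p.1.1) hf)
    have h2 := congrArg Prod.snd hf
    simp only at h2
    rw [← h2, h1]
  have himg : Finset.univ.filter
      (fun A : Finset ({e : Sym2 V // e ∈ G.edgeSet} × Fin 2) =>
        (IsIndepSet (lexProd (lineGraph G) (⊤ : SimpleGraph (Fin 2))) A ∧ A.card = n) ∧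
          A.image (fun p => p.1.1) = M) = Finset.univ.image F := by
    ext A
    simp only [Finset.mem_filter, Finset.mem_univ, true_and, Finset.mem_image]
    constructor
    · rintro ⟨⟨hind, hcard⟩, himgA⟩
      refine ⟨fun e => if (⟨e.1, hM.1 (Finset.mem_coe.mpr e.2)⟩, (0 : Fin 2)) ∈ A then 0 else 1,
        ?_⟩
      rw [hF]
      ext p
      simp only [Finset.mem_image, Finset.mem_attach, true_and]
      constructor
      · rintro ⟨e, rfl⟩
        by_cases h0 : (⟨e.1, hM.1 (Finset.mem_coe.mpr e.2)⟩, (0 : Fin 2)) ∈ A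
        · rw [if_pos h0]
          exact h0
        · rw [if_neg h0]
          -- need (⟨e.1, _⟩, 1) ∈ A
          have heM : (e : Sym2 V) ∈ A.image (fun p => p.1.1) := by rw [himgA]; exact e.2
          rw [Finset.mem_image] at heM
          obtain ⟨q, hq, hq1⟩ := heM
          have hq2 : q.1 = ⟨e.1, hM.1 (Finset.mem_coe.mpr e.2)⟩ := Subtype.ext hq1
          have hq3 : q.2 = 1 := by
            have : q.2 = 0 ∨ q.2 = 1 := by omega
            rcases this with h | h
            · exfalso; apply h0; rw [← hq2, ← h]; exact hq
            · exact h
          have : q = (⟨e.1, hM.1 (Finset.mem_coe.mpr e.2)⟩, (1 : Fin 2)) := by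
            rw [Prod.ext_iff]; exact ⟨hq2, hq3⟩
          rw [← this]; exact hq
      · intro hp
        have hpm : p.1.1 ∈ M := by rw [← himgA]; exact Finset.mem_image_of_mem _ hp
        refine ⟨⟨p.1.1, hpm⟩, ?_⟩
        have hfst : (⟨p.1.1, hM.1 (Finset.mem_coe.mpr hpm)⟩ :
            {e : Sym2 V // e ∈ G.edgeSet}) = p.1 := Subtype.ext rfl
        rcases (by omega : p.2 = 0 ∨ p.2 = 1) with h2 | h2
        · have h0 : (⟨p.1.1, hM.1 (Finset.mem_coe.mpr hpm)⟩, (0 : Fin 2)) ∈ A := by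
            have : (⟨p.1.1, hM.1 (Finset.mem_coe.mpr hpm)⟩, (0 : Fin 2)) = p := by
              rw [Prod.ext_iff]; exact ⟨hfst, h2.symm⟩
            rw [this]; exact hp
          rw [if_pos h0]
          rw [Prod.ext_iff]; exact ⟨hfst, h2.symm⟩
        · have h0 : ¬ ((⟨p.1.1, hM.1 (Finset.mem_coe.mpr hpm)⟩, (0 : Fin 2)) ∈ A) := by
            intro h0
            have := stmt9_fst_inj hind h0 hp hfst
            have := congrArg Prod.snd this
            simp only at this
            rw [h2] at this
            exact absurd this (by decide)
          rw [if_neg h0]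
          rw [Prod.ext_iff]; exact ⟨hfst, h2.symm⟩
    · rintro ⟨g, rfl⟩
      have hinj : Function.Injective
          (fun e : ↥M => ((⟨e.1, hM.1 (Finset.mem_coe.mpr e.2)⟩ :
            {e : Sym2 V // e ∈ G.edgeSet}), g e)) := by
        intro e f h
        exact Subtype.ext (congrArg (fun p => p.1.1) h)
      refine ⟨⟨?_, ?_⟩, ?_⟩
      · -- independence
        intro p hp q hq hne
        rw [Finset.mem_coe, hF] at hp hq
        simp only [Finset.mem_image, Finset.mem_attach, true_and] at hp hq
        obtain ⟨e, rfl⟩ := hp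
        obtain ⟨f, rfl⟩ := hq
        have hef : (e : Sym2 V) ≠ (f : Sym2 V) := by
          intro h
          exact hne (by rw [Subtype.ext h])
        rintro (⟨-, v, hv1, hv2⟩ | ⟨heq, -⟩)
        · exact hM.2 (Finset.mem_coe.mpr e.2) (Finset.mem_coe.mpr f.2) hef v ⟨hv1, hv2⟩
        · exact hef (congrArg (fun z : {e : Sym2 V // e ∈ G.edgeSet} => z.1) heq)
      · -- card
        rw [hF, Finset.card_image_of_injective _ hinj, Finset.card_attach, hn]
      · -- image
        rw [hF, Finset.image_image]
        have : ((fun p : {e : Sym2 V // e ∈ G.edgeSet} × Fin 2 => p.1.1) ∘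
            (fun e : ↥M => ((⟨e.1, hM.1 (Finset.mem_coe.mpr e.2)⟩ :
              {e : Sym2 V // e ∈ G.edgeSet}), g e))) = fun e : ↥M => e.1 := rfl
        rw [this]
        exact Finset.attach_image_val
  rw [himg, Finset.card_image_of_injective _ hFinj, Finset.card_univ]
  rw [Fintype.card_fun, Fintype.card_coe, Fintype.card_fin, hn]

private lemma stmt9_count {G : SimpleGraph V} (n : ℕ) :
    indepCount (lexProd (lineGraph G) (⊤ : SimpleGraph (Fin 2))) n = 2 ^ n * mCount G n := by
  classical
  rw [indepCount, mCount, Nat.card_eq_fintype_card, Nat.card_eq_fintype_card,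
    Fintype.card_subtype, Fintype.card_subtype]
  have hmaps : ∀ A ∈ Finset.univ.filter
      (fun A : Finset ({e : Sym2 V // e ∈ G.edgeSet} × Fin 2) =>
        IsIndepSet (lexProd (lineGraph G) (⊤ : SimpleGraph (Fin 2))) A ∧ A.card = n),
      A.image (fun p => p.1.1) ∈ Finset.univ.filter
        (fun M : Finset (Sym2 V) => IsGMatching G M ∧ M.card = n) := by
    intro A hA
    rw [Finset.mem_filter] at hA ⊢
    obtain ⟨-, hind, hcard⟩ := hA
    obtain ⟨hm, hc⟩ := stmt9_image_matching hind
    exact ⟨Finset.mem_univ _, hm, by rw [hc, hcard]⟩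
  rw [Finset.card_eq_sum_card_fiberwise hmaps]
  have hfib : ∀ M ∈ Finset.univ.filter
      (fun M : Finset (Sym2 V) => IsGMatching G M ∧ M.card = n),
      ((Finset.univ.filter
        (fun A : Finset ({e : Sym2 V // e ∈ G.edgeSet} × Fin 2) =>
          IsIndepSet (lexProd (lineGraph G) (⊤ : SimpleGraph (Fin 2))) A ∧ A.card = n)).filter
        (fun A => A.image (fun p => p.1.1) = M)).card = 2 ^ n := by
    intro M hMmem
    rw [Finset.mem_filter] at hMmem
    rw [Finset.filter_filter]
    exact stmt9_fiber_card hMmem.2.1 hMmem.2.2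
  rw [Finset.sum_congr rfl hfib, Finset.sum_const, smul_eq_mul, mul_comm]

private lemma stmt9_mCount_zero {G : SimpleGraph V} {k : ℕ} (hk : Fintype.card V < k) :
    mCount G k = 0 := by
  have : IsEmpty {M : Finset (Sym2 V) // IsGMatching G M ∧ M.card = k} := by
    constructor
    rintro ⟨M, hM, hcard⟩
    have hle : M.card ≤ Fintype.card V := by
      have := Finset.card_le_card_of_injOn (f := fun e : Sym2 V => e.out.1)
        (fun e _ => Finset.mem_univ (e.out.1)) (s := M) ?_
      · simpa using this
      · intro e he f hf h
        by_contra hne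
        have h' : e.out.1 = f.out.1 := h
        refine hM.2 he hf hne e.out.1 ⟨Sym2.out_fst_mem e, ?_⟩
        rw [h']
        exact Sym2.out_fst_mem f
    omega
  rw [mCount, Nat.card_of_isEmpty]

private lemma stmt9_indepCount_zero {W : Type} [Fintype W] {H : SimpleGraph W} {k : ℕ}
    (hk : Fintype.card W < k) : indepCount H k = 0 := by
  have : IsEmpty {A : Finset W // IsIndepSet H A ∧ A.card = k} := by
    constructor
    rintro ⟨A, -, hcard⟩
    have := Finset.card_le_univ A
    omega
  rw [indepCount, Nat.card_of_isEmpty]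

private lemma stmt9_sum_comp {s : Finset ℕ} {f : ℕ → Polynomial ℝ} {q : Polynomial ℝ} :
    (∑ k ∈ s, f k).comp q = ∑ k ∈ s, (f k).comp q := by
  simp only [Polynomial.comp, eval₂_finset_sum]

/-- Let `G` be a graph with no even cycles. Then `g(G,2x)` (the
`γ`-polynomial of `h^*` of the symmetric edge polytope of the suspension of `G`) equals
`i(L(G)[K_2], x)`; in particular it is the independence polynomial of a finite simple graph,
i.e. the `f`-polynomial of a flag simplicial complex. -/
theorem stmt9 (G : SimpleGraph V)
    (hG : ∀ (v : V) (w : G.Walk v v), w.IsCycle → ¬ Even w.length) :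
    (gPoly G).comp (C 2 * X) =
        iPoly (lexProd (lineGraph G) (⊤ : SimpleGraph (Fin 2))) ∧
    ∃ (U : Type) (_ : Fintype U) (K : SimpleGraph U),
      (gPoly G).comp (C 2 * X) = iPoly K := by
  have main : (gPoly G).comp (C 2 * X) =
      iPoly (lexProd (lineGraph G) (⊤ : SimpleGraph (Fin 2))) := by
    set N := max (Fintype.card V)
      (Fintype.card ({e : Sym2 V // e ∈ G.edgeSet} × Fin 2)) with hN
    have hN1 : Fintype.card V ≤ N := le_max_left _ _
    have hN2 : Fintype.card ({e : Sym2 V // e ∈ G.edgeSet} × Fin 2) ≤ N := le_max_right _ _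
    have hL : (gPoly G).comp (C 2 * X) =
        ∑ k ∈ Finset.range (N + 1), C ((2 : ℝ) ^ k * (mCount G k : ℝ)) * X ^ k := by
      rw [gPoly, stmt9_sum_comp]
      have hterm : ∀ k, (C (mCount G k : ℝ) * X ^ k).comp (C 2 * X) =
          C ((2 : ℝ) ^ k * (mCount G k : ℝ)) * X ^ k := by
        intro k
        rw [mul_comp, C_comp, X_pow_comp, mul_pow, ← C_pow, map_mul]
        ring
      rw [Finset.sum_congr rfl fun k _ => hterm k]
      apply Finset.sum_subset (Finset.range_subset_range.mpr (by omega))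
      intro k hk hk2
      rw [Finset.mem_range] at hk hk2
      rw [stmt9_mCount_zero (by omega)]
      simp
    have hR : iPoly (lexProd (lineGraph G) (⊤ : SimpleGraph (Fin 2))) =
        ∑ k ∈ Finset.range (N + 1), C ((2 : ℝ) ^ k * (mCount G k : ℝ)) * X ^ k := by
      rw [iPoly]
      have hterm : ∀ k, C ((indepCount
          (lexProd (lineGraph G) (⊤ : SimpleGraph (Fin 2))) k : ℝ)) * X ^ k =
          C ((2 : ℝ) ^ k * (mCount G k : ℝ)) * X ^ k := by
        intro k
        rw [stmt9_count k]
        push_cast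
        ring_nf
      rw [Finset.sum_congr rfl fun k _ => hterm k]
      apply Finset.sum_subset (Finset.range_subset_range.mpr (by omega))
      intro k hk hk2
      rw [Finset.mem_range] at hk hk2
      have h1 : indepCount (lexProd (lineGraph G) (⊤ : SimpleGraph (Fin 2))) k = 0 :=
        stmt9_indepCount_zero (by omega)
      have h2 : (2 : ℝ) ^ k * (mCount G k : ℝ) = 0 := by
        have := stmt9_count (G := G) k
        rw [h1] at this
        have : (2 : ℝ) ^ k * (mCount G k : ℝ) = ((2 ^ k * mCount G k : ℕ) : ℝ) := by push_cast; ring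
        rw [this]
        norm_cast
        omega
      rw [h2]
      simp
    rw [hL, hR]
  exact ⟨main, ({e : Sym2 V // e ∈ G.edgeSet} × Fin 2), inferInstance,
    lexProd (lineGraph G) (⊤ : SimpleGraph (Fin 2)), main⟩
end

section
/- Let G be a bipartite cactus graph. Then, as polynomials in x, Σ_{k≥0} |M(G,k)| (4x)^k = g(G,4x) + Σ_{R ∈ R'_2(G)} (−1)^{c(R)} · g(G−R, 4x) · (4x)^{|E(R)|/2}. -/
open Polynomial

variable {V : Type} [Fintype V] [DecidableEq V]

/-- `|M(G,k)|`: the number of vertex subsets that are the vertex set of some `k`-matching. -/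
noncomputable def MCount (G : SimpleGraph V) (k : ℕ) : ℕ :=
  Nat.card {W : Set V // ∃ M : Finset (Sym2 V), IsGMatching G M ∧ M.card = k ∧ edgeVerts M = W}

/-- `Cy` is the edge set of a cycle of `G`. -/
def IsCycleEdges (G : SimpleGraph V) (Cy : Finset (Sym2 V)) : Prop :=
  ∃ (v : V) (w : G.Walk v v), w.IsCycle ∧ w.edges.toFinset = Cy

/-- `Cy` is the edge set of an even cycle of `G`. -/
def IsEvenCycleEdges (G : SimpleGraph V) (Cy : Finset (Sym2 V)) : Prop :=
  ∃ (v : V) (w : G.Walk v v), w.IsCycle ∧ Even w.length ∧ w.edges.toFinset = Cy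

/-- A cactus graph: every edge belongs to at most one cycle. -/
def IsCactus (G : SimpleGraph V) : Prop :=
  ∀ C₁ C₂ : Finset (Sym2 V), IsCycleEdges G C₁ → IsCycleEdges G C₂ →
    ∀ e : Sym2 V, e ∈ C₁ → e ∈ C₂ → C₁ = C₂

/-- Delete a set of vertices from `G` (keeping the ambient vertex type):
only edges avoiding `S` remain. -/
def delVerts (G : SimpleGraph V) (S : Set V) : SimpleGraph V where
  Adj u v := G.Adj u v ∧ u ∉ S ∧ v ∉ S
  symm := ⟨fun _ _ h => ⟨h.1.symm, h.2.2, h.2.1⟩⟩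
  loopless := ⟨fun u h => G.loopless.irrefl u h.1⟩

/-- `R` is a (nonempty) collection of pairwise vertex-disjoint even cycles of `G`,
each cycle recorded by its edge set. -/
def IsDisjointEvenCycles (G : SimpleGraph V) (R : Finset (Finset (Sym2 V))) : Prop :=
  R.Nonempty ∧ (∀ Cy ∈ R, IsEvenCycleEdges G Cy) ∧
    (R : Set (Finset (Sym2 V))).Pairwise fun C₁ C₂ => Disjoint (edgeVerts C₁) (edgeVerts C₂)

open scoped Classical in
/-- `R'_2(G)`: the set of subgraphs of `G` consisting of vertex-disjoint even cycles. -/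
noncomputable def R2' (G : SimpleGraph V) : Finset (Finset (Finset (Sym2 V))) :=
  Finset.univ.filter fun R => IsDisjointEvenCycles G R


open Polynomial
open scoped Classical
set_option linter.unusedSectionVars false

namespace St10

variable {V : Type} [Fintype V] [DecidableEq V]

/-! ### Vertex sets as finsets -/

noncomputable def evF (F : Finset (Sym2 V)) : Finset V :=
  Finset.univ.filter (fun v => ∃ e ∈ F, v ∈ e)

lemma mem_evF {F : Finset (Sym2 V)} {v : V} : v ∈ evF F ↔ ∃ e ∈ F, v ∈ e := by
  simp [evF]

lemma edgeVerts_eq_evF (F : Finset (Sym2 V)) : edgeVerts F = ↑(evF F) := by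
  ext v; simp [edgeVerts, mem_evF]

lemma evF_mono {F F' : Finset (Sym2 V)} (h : F ⊆ F') : evF F ⊆ evF F' := by
  intro v hv; rw [mem_evF] at *; obtain ⟨e, he, hve⟩ := hv; exact ⟨e, h he, hve⟩

@[simp] lemma evF_empty : evF (∅ : Finset (Sym2 V)) = ∅ := by
  ext v; simp [mem_evF]

lemma evF_union (F F' : Finset (Sym2 V)) : evF (F ∪ F') = evF F ∪ evF F' := by
  ext v; simp [mem_evF]; constructor
  · rintro ⟨e, he | he, hv⟩
    · exact Or.inl ⟨e, he, hv⟩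
    · exact Or.inr ⟨e, he, hv⟩
  · rintro (⟨e, he, hv⟩ | ⟨e, he, hv⟩); exacts [⟨e, Or.inl he, hv⟩, ⟨e, Or.inr he, hv⟩]

/-! ### Matchings -/

variable {G : SimpleGraph V}

lemma matching_subset {N M : Finset (Sym2 V)} (h : IsGMatching G N) (hMN : M ⊆ N) :
    IsGMatching G M := by
  refine ⟨fun e he => h.1 (hMN he), ?_⟩
  intro e he f hf hef
  exact h.2 (hMN he) (hMN hf) hef

lemma matching_unique {N : Finset (Sym2 V)} (h : IsGMatching G N) {e f : Sym2 V} {v : V}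
    (he : e ∈ N) (hf : f ∈ N) (hve : v ∈ e) (hvf : v ∈ f) : e = f := by
  by_contra hne
  exact h.2 he hf hne v ⟨hve, hvf⟩

/-! ### Partner function of a matching -/

noncomputable def pf (N : Finset (Sym2 V)) (v : V) : V :=
  if h : ∃ e ∈ N, v ∈ e then Sym2.Mem.other' h.choose_spec.2 else v

lemma pf_not_covered {N : Finset (Sym2 V)} {v : V} (hv : v ∉ evF N) : pf N v = v := by
  rw [pf, dif_neg]; rwa [mem_evF] at hv

lemma pf_edge {N : Finset (Sym2 V)} {v : V} (hv : v ∈ evF N) : s(v, pf N v) ∈ N := by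
  rw [mem_evF] at hv
  rw [pf, dif_pos hv, Sym2.other_spec' hv.choose_spec.2]
  exact hv.choose_spec.1

lemma pf_mem {N : Finset (Sym2 V)} {v : V} (hv : v ∈ evF N) : pf N v ∈ evF N := by
  rw [mem_evF]
  exact ⟨s(v, pf N v), pf_edge hv, Sym2.mem_mk_right _ _⟩

lemma pf_ne {N : Finset (Sym2 V)} (hG : (N : Set (Sym2 V)) ⊆ G.edgeSet) {v : V}
    (hv : v ∈ evF N) : pf N v ≠ v := by
  intro h
  have := hG (pf_edge hv)
  rw [h, SimpleGraph.mem_edgeSet] at this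
  exact G.irrefl this

lemma pf_eq_of_edge (h : IsGMatching G N) {e : Sym2 V} {v : V} (he : e ∈ N) (hv : v ∈ e) :
    s(v, pf N v) = e := by
  have hcov : v ∈ evF N := mem_evF.2 ⟨e, he, hv⟩
  exact matching_unique h (pf_edge hcov) he (Sym2.mem_mk_left _ _) hv

lemma pf_invol (h : IsGMatching G N) : Function.Involutive (pf N) := by
  intro v
  by_cases hv : v ∈ evF N
  · have hw : pf N v ∈ evF N := pf_mem hv
    have h1 : s(pf N v, pf N (pf N v)) = s(v, pf N v) :=
      pf_eq_of_edge h (pf_edge hv) (Sym2.mem_mk_right _ _)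
    have h2 : s(pf N v, pf N (pf N v)) = s(pf N v, v) := by rw [h1, Sym2.eq_swap]
    exact Sym2.congr_right.mp h2
  · rw [pf_not_covered hv, pf_not_covered hv]

lemma pf_adj (h : IsGMatching G N) {v : V} (hv : v ∈ evF N) : G.Adj v (pf N v) := by
  have := h.1 (pf_edge hv)
  rwa [SimpleGraph.mem_edgeSet] at this

lemma fin2_eq {a b d : Fin 2} (h1 : a ≠ b) (h2 : d ≠ b) : a = d := by
  fin_cases a <;> fin_cases b <;> fin_cases d <;> simp_all

end St10


open Polynomial
open scoped Classical
set_option linter.unusedSectionVars false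

namespace St10

variable {V : Type} [Fintype V] [DecidableEq V] {G : SimpleGraph V}

lemma mem_zipS {l₁ l₂ : List V} {e : Sym2 V}
    (h : e ∈ List.zipWith (fun x y => s(x, y)) l₁ l₂) :
    ∃ i, ∃ h1 : i < l₁.length, ∃ h2 : i < l₂.length, e = s(l₁[i], l₂[i]) := by
  induction l₁ generalizing l₂ with
  | nil => simp at h
  | cons x xs ih =>
    cases l₂ with
    | nil => simp at h
    | cons y ys =>
      simp only [List.zipWith_cons_cons, List.mem_cons] at h
      rcases h with h | h
      · exact ⟨0, by simp, by simp, h⟩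
      · obtain ⟨i, h1, h2, he⟩ := ih h
        exact ⟨i + 1, by simpa using h1, by simpa using h2, he⟩

lemma zip_trunc (f : V → V → Sym2 V) :
    ∀ (l₂ l₁ : List V) (x : V), l₂.length ≤ l₁.length →
      List.zipWith f (l₁ ++ [x]) l₂ = List.zipWith f l₁ l₂ := by
  intro l₂
  induction l₂ with
  | nil => simp
  | cons y ys ih =>
    intro l₁ x hlen
    cases l₁ with
    | nil => simp at hlen
    | cons z zs =>
      simp only [List.cons_append, List.zipWith_cons_cons]
      rw [ih zs x (by simpa using hlen)]

lemma exists_walk (G : SimpleGraph V) :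
    ∀ (l : List V) (a b : V), List.Chain G.Adj a (l ++ [b]) →
      ∃ w : G.Walk a b, w.support = a :: (l ++ [b]) ∧
        w.edges = List.zipWith (fun x y => s(x, y)) (a :: (l ++ [b])) (l ++ [b]) := by
  intro l
  induction l with
  | nil =>
    intro a b hch
    rw [List.nil_append] at hch; unfold List.Chain at hch; rw [List.chain_cons] at hch
    exact ⟨SimpleGraph.Walk.cons hch.1 SimpleGraph.Walk.nil, by simp, by simp⟩
  | cons c t ih =>
    intro a b hch
    rw [List.cons_append] at hch; unfold List.Chain at hch; rw [List.chain_cons] at hch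
    obtain ⟨w', hsup, hedg⟩ := ih c b hch.2
    refine ⟨SimpleGraph.Walk.cons hch.1 w', ?_, ?_⟩
    · simp [SimpleGraph.Walk.support_cons, hsup]
    · simp [SimpleGraph.Walk.edges_cons, hedg]

lemma path_of_nodup_support {u v : V} (p : G.Walk u v) (h : p.support.Nodup) : p.IsPath :=
  (SimpleGraph.Walk.isPath_def p).2 h

lemma cycle_of_list (G : SimpleGraph V) (a : V) (l : List V)
    (hnd : (a :: l).Nodup) (hlen : 2 ≤ l.length)
    (hch : List.Chain G.Adj a (l ++ [a])) :
    ∃ w : G.Walk a a, w.IsCycle ∧ w.length = l.length + 1 ∧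
      w.edges = List.zipWith (fun x y => s(x, y)) (a :: l) (l ++ [a]) := by
  obtain ⟨c, t, rfl⟩ : ∃ c t, l = c :: t := by
    cases l with
    | nil => simp at hlen
    | cons c t => exact ⟨c, t, rfl⟩
  have ht1 : 1 ≤ t.length := by simpa using hlen
  rw [List.cons_append] at hch; unfold List.Chain at hch; rw [List.chain_cons] at hch
  obtain ⟨p, hsup, hedg⟩ := exists_walk G t c a hch.2
  -- facts from nodup
  have hnd' : (c :: (t ++ [a])).Nodup := by
    have h1 : a ∉ c :: t := (List.nodup_cons.1 hnd).1
    have h2 : (c :: t).Nodup := (List.nodup_cons.1 hnd).2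
    rw [List.nodup_cons]
    constructor
    · simp only [List.mem_append, List.mem_singleton]
      rintro (hc | rfl)
      · exact (List.nodup_cons.1 h2).1 hc
      · exact h1 List.mem_cons_self
    · rw [List.nodup_append_comm]
      rw [List.singleton_append, List.nodup_cons]
      constructor
      · intro ha; exact h1 (List.mem_cons_of_mem _ ha)
      · exact (List.nodup_cons.1 h2).2
  have hpath : p.IsPath := path_of_nodup_support p (by rw [hsup]; exact hnd')
  have hnotmem : s(a, c) ∉ p.edges := by
    intro hmem
    rw [hedg] at hmem
    obtain ⟨i, h1, h2, he⟩ := mem_zipS hmem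
    have h2' : i < t.length + 1 := by simpa using h2
    have hL1 : (c :: (t ++ [a]))[i]'h1 ∈ c :: t := by
      have : (c :: (t ++ [a])) = (c :: t) ++ [a] := by simp
      have hi : i < (c :: t).length := by simpa using h2'
      rw [List.getElem_of_eq this, List.getElem_append_left hi]
      exact List.getElem_mem _
    have hna : a ∉ c :: t := by
      simp only [List.nodup_cons] at hnd
      exact hnd.1
    rcases Sym2.eq_iff.1 he with ⟨hax, hcy⟩ | ⟨hay, hcx⟩
    · exact hna (hax ▸ hL1)
    · -- a = (t ++ [a])[i], c = L1[i]
      have hi_eq : i = t.length := by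
        by_contra hne
        have hi : i < t.length := lt_of_le_of_ne (by omega) hne
        have h3 : (t ++ [a])[i]'h2 = t[i]'hi := List.getElem_append_left hi
        apply hna
        apply List.mem_cons_of_mem
        rw [hay, h3]
        exact List.getElem_mem _
      -- then c = (c :: t)[t.length] ∈ t
      have hL1' : (c :: (t ++ [a]))[i]'h1 ∈ t := by
        have heq : (c :: (t ++ [a])) = ([c] ++ t) ++ [a] := by simp
        have hi2 : i < ([c] ++ t).length := by simp; omega
        rw [List.getElem_of_eq heq, List.getElem_append_left hi2]
        have h1le : [c].length ≤ i := by simp [hi_eq]; omega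
        rw [List.getElem_append_right h1le]
        exact List.getElem_mem _
      have : c ∈ t := by rw [hcx]; exact hL1'
      simp only [List.nodup_cons, List.mem_cons] at hnd
      exact hnd.2.1 this
  refine ⟨SimpleGraph.Walk.cons hch.1 p, ?_, ?_, ?_⟩
  · exact (SimpleGraph.Walk.cons_isCycle_iff p hch.1).2 ⟨hpath, hnotmem⟩
  · have hp : p.length = t.length + 1 := by
      have h := p.length_support
      rw [hsup] at h
      simp at h
      omega
    rw [SimpleGraph.Walk.length_cons, hp]
    simp
  · rw [SimpleGraph.Walk.edges_cons, hedg]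
    have : (c :: (t ++ [a])) = (c :: t) ++ [a] := by simp
    rw [this, zip_trunc _ _ _ _ (by simp)]
    simp [List.zipWith]

lemma edges_getVert {u v : V} (w : G.Walk u v) {e : Sym2 V} :
    e ∈ w.edges ↔ ∃ i < w.length, e = s(w.getVert i, w.getVert (i + 1)) := by
  induction w with
  | nil => simp
  | @cons a b c h p ih =>
    simp only [SimpleGraph.Walk.edges_cons, List.mem_cons, SimpleGraph.Walk.length_cons]
    constructor
    · rintro (rfl | hmem)
      · exact ⟨0, by omega, by simp [SimpleGraph.Walk.getVert_zero,
          SimpleGraph.Walk.getVert_cons_succ]⟩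
      · obtain ⟨i, hi, he⟩ := ih.1 hmem
        exact ⟨i + 1, by omega, by simpa [SimpleGraph.Walk.getVert_cons_succ] using he⟩
    · rintro ⟨i, hi, he⟩
      cases i with
      | zero =>
        left
        rw [he]
        simp [SimpleGraph.Walk.getVert_zero, SimpleGraph.Walk.getVert_cons_succ]
      | succ j =>
        right
        exact ih.2 ⟨j, by omega, by simpa [SimpleGraph.Walk.getVert_cons_succ] using he⟩

lemma support_map_getVert {u v : V} (w : G.Walk u v) :
    w.support = (List.range (w.length + 1)).map w.getVert := by
  induction w with
  | nil => simp [List.range_succ]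
  | @cons a b c h p ih =>
    rw [SimpleGraph.Walk.support_cons, ih]
    conv_rhs => rw [show (SimpleGraph.Walk.cons h p).length + 1 = (p.length + 1) + 1 from by
      simp [SimpleGraph.Walk.length_cons], List.range_succ_eq_map, List.map_cons, List.map_map]
    congr 1

lemma vtx_inj {a : V} (w : G.Walk a a) (hcyc : w.IsCycle) {r r' : ℕ}
    (hr : r ≤ w.length) (hr' : r' ≤ w.length) (h : w.getVert r = w.getVert r') :
    r = r' ∨ (r = 0 ∧ r' = w.length) ∨ (r = w.length ∧ r' = 0) := by
  have hnd : w.support.tail.Nodup := hcyc.support_nodup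
  rw [support_map_getVert, List.range_succ_eq_map] at hnd
  simp only [List.map_cons, List.tail_cons, List.map_map] at hnd
  have hinj : ∀ x ∈ List.range w.length, ∀ y ∈ List.range w.length,
      w.getVert (x + 1) = w.getVert (y + 1) → x = y := by
    have := (List.nodup_map_iff_inj_on List.nodup_range).1 hnd
    intro x hx y hy hxy
    exact this x hx y hy (by simpa [Function.comp] using hxy)
  have h0 : w.getVert 0 = w.getVert w.length := by
    rw [SimpleGraph.Walk.getVert_zero, SimpleGraph.Walk.getVert_length]
  have hlen3 : 3 ≤ w.length := hcyc.three_le_length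
  rcases Nat.eq_zero_or_pos r with rfl | hrpos
  · rcases Nat.eq_zero_or_pos r' with rfl | hr'pos
    · left; rfl
    · rcases Nat.eq_or_lt_of_le hr' with rfl | hr'lt
      · right; left; exact ⟨rfl, rfl⟩
      · -- getVert 0 = getVert r', 1 ≤ r' < len; also getVert 0 = getVert len: contradiction unless..
        have : r' - 1 = w.length - 1 := by
          apply hinj _ (by rw [List.mem_range]; omega) _ (by rw [List.mem_range]; omega)
          have e1 : r' - 1 + 1 = r' := by omega
          have e2 : w.length - 1 + 1 = w.length := by omega
          rw [e1, e2, ← h, ← h0]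
        omega
  · rcases Nat.eq_zero_or_pos r' with rfl | hr'pos
    · rcases Nat.eq_or_lt_of_le hr with rfl | hrlt
      · right; right; exact ⟨rfl, rfl⟩
      · have : r - 1 = w.length - 1 := by
          apply hinj _ (by rw [List.mem_range]; omega) _ (by rw [List.mem_range]; omega)
          have e1 : r - 1 + 1 = r := by omega
          have e2 : w.length - 1 + 1 = w.length := by omega
          rw [e1, e2, ← h0, ← h]
        omega
    · left
      have : r - 1 = r' - 1 := by
        apply hinj _ (by rw [List.mem_range]; omega) _ (by rw [List.mem_range]; omega)
        have e1 : r - 1 + 1 = r := by omega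
        have e2 : r' - 1 + 1 = r' := by omega
        rw [e1, e2, h]
      omega

end St10


open Polynomial
open scoped Classical
set_option linter.unusedSectionVars false
set_option maxHeartbeats 1000000

namespace St10

variable {V : Type} [Fintype V] [DecidableEq V] {G : SimpleGraph V}

/-- A "half" of a cycle edge-set: a perfect matching on the cycle's vertices using cycle edges. -/
def IsHalf (G : SimpleGraph V) (Cy H : Finset (Sym2 V)) : Prop :=
  H ⊆ Cy ∧ IsGMatching G H ∧ evF H = evF Cy

lemma cycEdges_subset {Cy : Finset (Sym2 V)} (h : IsCycleEdges G Cy) :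
    ∀ e ∈ Cy, e ∈ G.edgeSet := by
  obtain ⟨a, w, hcyc, hCy⟩ := h
  intro e he
  rw [← hCy, List.mem_toFinset] at he
  exact w.edges_subset_edgeSet he

lemma evenCyc_isCyc {Cy : Finset (Sym2 V)} (h : IsEvenCycleEdges G Cy) : IsCycleEdges G Cy := by
  obtain ⟨a, w, hcyc, _, hCy⟩ := h
  exact ⟨a, w, hcyc, hCy⟩

/-- Main structure lemma: an even cycle edge set splits into two disjoint halves. -/
lemma exists_halves {Cy : Finset (Sym2 V)} (h : IsEvenCycleEdges G Cy) :
    ∃ H0 H1 : Finset (Sym2 V), IsHalf G Cy H0 ∧ IsHalf G Cy H1 ∧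
      H0 ∩ H1 = ∅ ∧ H0 ∪ H1 = Cy := by
  obtain ⟨a, w, hcyc, heven, hCy⟩ := h
  set n' := w.length with hn'
  have h3 : 3 ≤ n' := hcyc.three_le_length
  have even2 : n' % 2 = 0 := Nat.even_iff.1 heven
  set eF : ℕ → Sym2 V := fun i => s(w.getVert i, w.getVert (i + 1)) with heF
  have hmemCy : ∀ {e : Sym2 V}, e ∈ Cy ↔ ∃ i < n', e = eF i := by
    intro e
    rw [← hCy, List.mem_toFinset, edges_getVert]
  have key : ∀ r r', r ≤ n' → r' ≤ n' → w.getVert r = w.getVert r' →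
      r = r' ∨ (r = 0 ∧ r' = n') ∨ (r = n' ∧ r' = 0) := fun r r' hr hr' hh =>
    vtx_inj w hcyc hr hr' hh
  have hedgeCyc : ∀ i, i < n' → eF i ∈ Cy := fun i hi => hmemCy.2 ⟨i, hi, rfl⟩
  have hsubG : ∀ e ∈ Cy, e ∈ G.edgeSet := cycEdges_subset ⟨a, w, hcyc, hCy⟩
  -- same parity sharing a vertex forces equal index
  have share_eq : ∀ i j, i < n' → j < n' → i % 2 = j % 2 →
      (∃ v, v ∈ eF i ∧ v ∈ eF j) → i = j := by
    rintro i j hi hj hp ⟨v, hvi, hvj⟩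
    rw [heF, Sym2.mem_iff] at hvi hvj
    have main : ∀ r r', r ≤ n' → r' ≤ n' → (r = i ∨ r = i + 1) → (r' = j ∨ r' = j + 1) →
        w.getVert r = w.getVert r' → i = j := by
      intro r r' hr hr' hri hrj heq
      rcases key r r' hr hr' heq with hh | ⟨h1, h2⟩ | ⟨h1, h2⟩ <;> omega
    rcases hvi with hvi | hvi <;> rcases hvj with hvj | hvj
    · exact main i j (by omega) (by omega) (Or.inl rfl) (Or.inl rfl) (hvi ▸ hvj ▸ rfl)
    · exact main i (j+1) (by omega) (by omega) (Or.inl rfl) (Or.inr rfl) (hvi ▸ hvj ▸ rfl)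
    · exact main (i+1) j (by omega) (by omega) (Or.inr rfl) (Or.inl rfl) (hvi ▸ hvj ▸ rfl)
    · exact main (i+1) (j+1) (by omega) (by omega) (Or.inr rfl) (Or.inr rfl) (hvi ▸ hvj ▸ rfl)
  -- different parity edges are distinct
  have share_cross : ∀ i j, i < n' → j < n' → i % 2 = 0 → j % 2 = 1 → eF i ≠ eF j := by
    intro i j hi hj hpi hpj heq
    rw [heF] at heq
    simp only [Sym2.eq_iff] at heq
    rcases heq with ⟨h1, h2⟩ | ⟨h1, h2⟩
    · rcases key i j (by omega) (by omega) h1 with hh | ⟨ha, hb⟩ | ⟨ha, hb⟩ <;> omega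
    · rcases key i (j+1) (by omega) (by omega) h1 with hh | ⟨ha, hb⟩ | ⟨ha, hb⟩ <;>
        rcases key (i+1) j (by omega) (by omega) h2 with hh' | ⟨ha', hb'⟩ | ⟨ha', hb'⟩ <;> omega
  -- vertices of Cy
  have memevF : ∀ v, v ∈ evF Cy ↔ ∃ r < n', v = w.getVert r := by
    intro v
    rw [mem_evF]
    constructor
    · rintro ⟨e, he, hv⟩
      obtain ⟨i, hi, rfl⟩ := hmemCy.1 he
      rw [heF, Sym2.mem_iff] at hv
      rcases hv with rfl | rfl
      · exact ⟨i, hi, rfl⟩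
      · rcases Nat.lt_or_ge (i+1) n' with hh | hh
        · exact ⟨i + 1, hh, rfl⟩
        · have : i + 1 = n' := by omega
          refine ⟨0, by omega, ?_⟩
          rw [this, SimpleGraph.Walk.getVert_length, SimpleGraph.Walk.getVert_zero]
    · rintro ⟨r, hr, rfl⟩
      rcases Nat.eq_zero_or_pos r with rfl | hrpos
      · exact ⟨eF 0, hedgeCyc 0 (by omega), by simp only [heF]; exact Sym2.mem_mk_left _ _⟩
      · exact ⟨eF (r-1), hedgeCyc (r-1) (by omega),
          by simp only [heF]
             have hthis : r - 1 + 1 = r := by omega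
             rw [hthis]; exact Sym2.mem_mk_right _ _⟩
  -- the two halves
  refine ⟨((Finset.range n').filter (fun i => i % 2 = 0)).image eF,
          ((Finset.range n').filter (fun i => i % 2 = 1)).image eF, ?_, ?_, ?_, ?_⟩
  · -- H0 is a half
    refine ⟨?_, ⟨?_, ?_⟩, ?_⟩
    · intro e he
      simp only [Finset.mem_image, Finset.mem_filter, Finset.mem_range] at he
      obtain ⟨i, ⟨hi, _⟩, rfl⟩ := he
      exact hedgeCyc i hi
    · intro e he
      simp only [Finset.coe_image, Set.mem_image, Finset.mem_coe, Finset.mem_filter,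
        Finset.mem_range] at he
      obtain ⟨i, ⟨hi, _⟩, rfl⟩ := he
      exact hsubG _ (hedgeCyc i hi)
    · intro e he f hf hef v hv
      simp only [Finset.coe_image, Set.mem_image, Finset.mem_coe, Finset.mem_filter,
        Finset.mem_range] at he hf
      obtain ⟨i, ⟨hi, hpi⟩, rfl⟩ := he
      obtain ⟨j, ⟨hj, hpj⟩, rfl⟩ := hf
      exact hef (by rw [share_eq i j hi hj (by omega) ⟨v, hv⟩])
    · apply Finset.Subset.antisymm
      · apply evF_mono
        intro e he
        simp only [Finset.mem_image, Finset.mem_filter, Finset.mem_range] at he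
        obtain ⟨i, ⟨hi, _⟩, rfl⟩ := he
        exact hedgeCyc i hi
      · intro v hv
        obtain ⟨r, hr, rfl⟩ := (memevF v).1 hv
        rw [mem_evF]
        rcases Nat.even_or_odd r with hre | hro
        · refine ⟨eF r, ?_, by simp only [heF]; exact Sym2.mem_mk_left _ _⟩
          simp only [Finset.mem_image, Finset.mem_filter, Finset.mem_range]
          exact ⟨r, ⟨hr, Nat.even_iff.1 hre⟩, rfl⟩
        · have hr1 : r - 1 + 1 = r := by
            rcases hro with ⟨m, hm⟩; omega
          refine ⟨eF (r-1), ?_, by simp only [heF]; rw [hr1]; exact Sym2.mem_mk_right _ _⟩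
          simp only [Finset.mem_image, Finset.mem_filter, Finset.mem_range]
          refine ⟨r - 1, ⟨by omega, ?_⟩, rfl⟩
          rcases hro with ⟨m, hm⟩; omega
  · -- H1 is a half
    refine ⟨?_, ⟨?_, ?_⟩, ?_⟩
    · intro e he
      simp only [Finset.mem_image, Finset.mem_filter, Finset.mem_range] at he
      obtain ⟨i, ⟨hi, _⟩, rfl⟩ := he
      exact hedgeCyc i hi
    · intro e he
      simp only [Finset.coe_image, Set.mem_image, Finset.mem_coe, Finset.mem_filter,
        Finset.mem_range] at he
      obtain ⟨i, ⟨hi, _⟩, rfl⟩ := he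
      exact hsubG _ (hedgeCyc i hi)
    · intro e he f hf hef v hv
      simp only [Finset.coe_image, Set.mem_image, Finset.mem_coe, Finset.mem_filter,
        Finset.mem_range] at he hf
      obtain ⟨i, ⟨hi, hpi⟩, rfl⟩ := he
      obtain ⟨j, ⟨hj, hpj⟩, rfl⟩ := hf
      exact hef (by rw [share_eq i j hi hj (by omega) ⟨v, hv⟩])
    · apply Finset.Subset.antisymm
      · apply evF_mono
        intro e he
        simp only [Finset.mem_image, Finset.mem_filter, Finset.mem_range] at he
        obtain ⟨i, ⟨hi, _⟩, rfl⟩ := he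
        exact hedgeCyc i hi
      · intro v hv
        obtain ⟨r, hr, rfl⟩ := (memevF v).1 hv
        rw [mem_evF]
        rcases Nat.even_or_odd r with hre | hro
        · rcases Nat.eq_zero_or_pos r with rfl | hrpos
          · refine ⟨eF (n' - 1), ?_, ?_⟩
            · simp only [Finset.mem_image, Finset.mem_filter, Finset.mem_range]
              exact ⟨n' - 1, ⟨by omega, by omega⟩, rfl⟩
            · simp only [heF]
              have hne : n' - 1 + 1 = n' := by omega
              rw [hne]
              have : w.getVert n' = w.getVert 0 := by
                rw [SimpleGraph.Walk.getVert_length, SimpleGraph.Walk.getVert_zero]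
              rw [← this]
              exact Sym2.mem_mk_right _ _
          · have hre' : r % 2 = 0 := Nat.even_iff.1 hre
            refine ⟨eF (r-1), ?_, ?_⟩
            · simp only [Finset.mem_image, Finset.mem_filter, Finset.mem_range]
              exact ⟨r - 1, ⟨by omega, by omega⟩, rfl⟩
            · simp only [heF]
              have hr1 : r - 1 + 1 = r := by omega
              rw [hr1]
              exact Sym2.mem_mk_right _ _
        · have hro' : r % 2 = 1 := Nat.odd_iff.1 hro
          have hrn : r < n' := by omega
          refine ⟨eF r, ?_, by simp only [heF]; exact Sym2.mem_mk_left _ _⟩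
          simp only [Finset.mem_image, Finset.mem_filter, Finset.mem_range]
          exact ⟨r, ⟨hrn, hro'⟩, rfl⟩
  · -- disjoint
    rw [Finset.eq_empty_iff_forall_notMem]
    intro e he
    rw [Finset.mem_inter] at he
    obtain ⟨h0, h1⟩ := he
    simp only [Finset.mem_image, Finset.mem_filter, Finset.mem_range] at h0 h1
    obtain ⟨i, ⟨hi, hpi⟩, rfl⟩ := h0
    obtain ⟨j, ⟨hj, hpj⟩, hji⟩ := h1
    exact share_cross i j hi hj hpi hpj hji.symm
  · -- union
    apply Finset.Subset.antisymm
    · intro e he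
      rw [Finset.mem_union] at he
      rcases he with he | he <;>
      · simp only [Finset.mem_image, Finset.mem_filter, Finset.mem_range] at he
        obtain ⟨i, ⟨hi, _⟩, rfl⟩ := he
        exact hedgeCyc i hi
    · intro e he
      obtain ⟨i, hi, rfl⟩ := hmemCy.1 he
      rw [Finset.mem_union]
      rcases Nat.even_or_odd i with hp | hp
      · left
        simp only [Finset.mem_image, Finset.mem_filter, Finset.mem_range]
        exact ⟨i, ⟨hi, Nat.even_iff.1 hp⟩, rfl⟩
      · right
        simp only [Finset.mem_image, Finset.mem_filter, Finset.mem_range]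
        exact ⟨i, ⟨hi, Nat.odd_iff.1 hp⟩, rfl⟩

end St10


open Polynomial
open scoped Classical
set_option linter.unusedSectionVars false
set_option maxHeartbeats 1000000

namespace St10

variable {V : Type} [Fintype V] [DecidableEq V] {G : SimpleGraph V}

lemma matchVerts {N : Finset (Sym2 V)} (h : IsGMatching G N) :
    (evF N).card = 2 * N.card := by
  have hev : evF N = N.biUnion (fun e => Finset.univ.filter (· ∈ e)) := by
    ext v
    simp [mem_evF]
  rw [hev, Finset.card_biUnion]
  · have hc : ∀ e ∈ N, (Finset.univ.filter (· ∈ e)).card = 2 := by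
      intro e he
      have heG : e ∈ G.edgeSet := h.1 he
      induction e using Sym2.ind with
      | _ x y =>
        have hxy : x ≠ y := G.ne_of_adj ((SimpleGraph.mem_edgeSet G).1 heG)
        have hpair : Finset.univ.filter (· ∈ s(x, y)) = {x, y} := by
          ext v; simp [Sym2.mem_iff]
        rw [hpair, Finset.card_pair hxy]
    rw [Finset.sum_congr rfl hc, Finset.sum_const, smul_eq_mul, mul_comm]
  · intro e he f hf hef
    rw [Function.onFun, Finset.disjoint_left]
    intro v hv hv'
    rw [Finset.mem_filter] at hv hv'
    exact h.2 he hf hef v ⟨hv.2, hv'.2⟩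

lemma memevF_walk {a : V} (w : G.Walk a a) (hcyc : w.IsCycle) {v : V} :
    v ∈ evF w.edges.toFinset ↔ ∃ r < w.length, v = w.getVert r := by
  have h3 : 3 ≤ w.length := hcyc.three_le_length
  rw [mem_evF]
  constructor
  · rintro ⟨e, he, hv⟩
    rw [List.mem_toFinset, edges_getVert] at he
    obtain ⟨i, hi, rfl⟩ := he
    rw [Sym2.mem_iff] at hv
    rcases hv with rfl | rfl
    · exact ⟨i, hi, rfl⟩
    · rcases Nat.lt_or_ge (i+1) w.length with hh | hh
      · exact ⟨i + 1, hh, rfl⟩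
      · have hii : i + 1 = w.length := by omega
        refine ⟨0, by omega, ?_⟩
        rw [hii, SimpleGraph.Walk.getVert_length, SimpleGraph.Walk.getVert_zero]
  · rintro ⟨r, hr, rfl⟩
    rcases Nat.eq_zero_or_pos r with rfl | hrpos
    · refine ⟨s(w.getVert 0, w.getVert 1), ?_, Sym2.mem_mk_left _ _⟩
      rw [List.mem_toFinset, edges_getVert]
      exact ⟨0, by omega, rfl⟩
    · refine ⟨s(w.getVert (r-1), w.getVert (r-1+1)), ?_, ?_⟩
      · rw [List.mem_toFinset, edges_getVert]
        exact ⟨r - 1, by omega, rfl⟩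
      · have : r - 1 + 1 = r := by omega
        rw [this]
        exact Sym2.mem_mk_right _ _

lemma cyc_verts_card {Cy : Finset (Sym2 V)} (h : IsCycleEdges G Cy) :
    (evF Cy).card = Cy.card := by
  obtain ⟨a, w, hcyc, hCy⟩ := h
  have hcard : Cy.card = w.length := by
    rw [← hCy, List.toFinset_card_of_nodup hcyc.edges_nodup, SimpleGraph.Walk.length_edges]
  have hev : evF Cy = (Finset.range w.length).image w.getVert := by
    ext v
    rw [← hCy]
    rw [memevF_walk w hcyc]
    simp only [Finset.mem_image, Finset.mem_range]
    constructor
    · rintro ⟨r, hr, rfl⟩; exact ⟨r, hr, rfl⟩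
    · rintro ⟨r, hr, rfl⟩; exact ⟨r, hr, rfl⟩
  rw [hev, hcard, Finset.card_image_of_injOn, Finset.card_range]
  intro r hr r' hr' heq
  simp only [Finset.coe_range, Set.mem_Iio] at hr hr'
  rcases vtx_inj w hcyc (le_of_lt hr) (le_of_lt hr') heq with hh | ⟨h1, h2⟩ | ⟨h1, h2⟩ <;> omega

lemma cyc_card_even {Cy : Finset (Sym2 V)} (h : IsEvenCycleEdges G Cy) : Even Cy.card := by
  obtain ⟨a, w, hcyc, heven, hCy⟩ := h
  have hcard : Cy.card = w.length := by
    rw [← hCy, List.toFinset_card_of_nodup hcyc.edges_nodup, SimpleGraph.Walk.length_edges]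
  rwa [hcard]

lemma cyc_nonempty {Cy : Finset (Sym2 V)} (h : IsCycleEdges G Cy) : Cy.Nonempty := by
  obtain ⟨a, w, hcyc, hCy⟩ := h
  rw [← Finset.card_pos]
  have hcard : Cy.card = w.length := by
    rw [← hCy, List.toFinset_card_of_nodup hcyc.edges_nodup, SimpleGraph.Walk.length_edges]
  have := hcyc.three_le_length
  omega

lemma half_card {Cy H : Finset (Sym2 V)} (h : IsEvenCycleEdges G Cy) (hH : IsHalf G Cy H) :
    Cy.card = 2 * H.card := by
  have h1 := matchVerts hH.2.1
  rw [hH.2.2, cyc_verts_card (evenCyc_isCyc h)] at h1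
  exact h1

end St10


open Polynomial
open scoped Classical
set_option linter.unusedSectionVars false
set_option maxHeartbeats 2000000

namespace St10

variable {V : Type} [Fintype V] [DecidableEq V] {G : SimpleGraph V}

lemma chain_of_fn (R : V → V → Prop) (F : ℕ → V) :
    ∀ (m : ℕ), (∀ j < m, R (F j) (F (j + 1))) →
      List.Chain R (F 0) ((List.range m).map (fun j => F (j + 1))) := by
  intro m
  induction m generalizing F with
  | zero => intro _; exact List.Chain.nil
  | succ m ih =>
    intro h
    rw [List.range_succ_eq_map, List.map_cons, List.map_map]
    unfold List.Chain; rw [List.chain_cons]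
    constructor
    · exact h 0 (by omega)
    · have := ih (fun j => F (j + 1)) (fun j hj => h (j + 1) (by omega))
      simpa [Function.comp_def, List.Chain] using this

/-- The master lemma: from two matchings with the same vertex set and an edge in their
symmetric difference, extract an alternating even cycle. -/
lemma master (hb : G.Colorable 2)
    {N₁ N₂ : Finset (Sym2 V)} (h₁ : IsGMatching G N₁) (h₂ : IsGMatching G N₂)
    (hW : evF N₁ = evF N₂) {e₀ : Sym2 V} (he₁ : e₀ ∈ N₁) (he₂ : e₀ ∉ N₂) :
    ∃ Cy : Finset (Sym2 V), IsEvenCycleEdges G Cy ∧ e₀ ∈ Cy ∧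
      IsHalf G Cy (N₁ ∩ Cy) ∧ IsHalf G Cy (N₂ ∩ Cy) ∧
      (N₁ ∩ Cy) ∩ (N₂ ∩ Cy) = ∅ ∧ (N₁ ∩ Cy) ∪ (N₂ ∩ Cy) = Cy := by
  induction e₀ using Sym2.ind with
  | _ x y =>
  set σ : Equiv.Perm V := ((pf_invol h₁).toPerm _).trans ((pf_invol h₂).toPerm _) with hσ
  have hσap : ∀ v, σ v = pf N₂ (pf N₁ v) := by
    intro v
    rw [hσ, Equiv.trans_apply, Function.Involutive.coe_toPerm, Function.Involutive.coe_toPerm]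
  have hvx : x ∈ evF N₁ := mem_evF.2 ⟨s(x, y), he₁, Sym2.mem_mk_left _ _⟩
  have hvy : y = pf N₁ x := by
    have := pf_eq_of_edge h₁ he₁ (Sym2.mem_mk_left x y)
    exact (Sym2.congr_right.1 this).symm
  -- coverage is preserved
  have hcov1 : ∀ v, v ∈ evF N₁ → pf N₁ v ∈ evF N₁ := fun v hv => pf_mem hv
  have hcovσ : ∀ v, v ∈ evF N₁ → σ v ∈ evF N₁ := by
    intro v hv
    rw [hσap]
    have h1 : pf N₁ v ∈ evF N₂ := hW ▸ pf_mem hv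
    have h2 : pf N₂ (pf N₁ v) ∈ evF N₂ := pf_mem h1
    rw [← hW] at h2
    exact h2
  have hit : ∀ i, (⇑σ)^[i] x ∈ evF N₁ := by
    intro i
    induction i with
    | zero => simpa using hvx
    | succ i ih => rw [Function.iterate_succ_apply']; exact hcovσ _ ih
  -- coloring
  obtain ⟨c⟩ := hb
  have hcol1 : ∀ v, v ∈ evF N₁ → c (pf N₁ v) ≠ c v := by
    intro v hv
    exact (c.valid (pf_adj h₁ hv)).symm
  have hcol2 : ∀ v, v ∈ evF N₂ → c (pf N₂ v) ≠ c v := by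
    intro v hv
    exact (c.valid (pf_adj h₂ hv)).symm
  have hcolσ : ∀ v, v ∈ evF N₁ → c (σ v) = c v := by
    intro v hv
    rw [hσap]
    have h1 : pf N₁ v ∈ evF N₂ := hW ▸ pf_mem hv
    exact fin2_eq (hcol2 _ h1) (hcol1 _ hv).symm
    -- c (pf N₂ (pf N₁ v)) ≠ c (pf N₁ v), c v ≠ c (pf N₁ v) → eq
  have hcoli : ∀ i, c ((⇑σ)^[i] x) = c x := by
    intro i
    induction i with
    | zero => simp
    | succ i ih => rw [Function.iterate_succ_apply', hcolσ _ (hit i), ih]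
  -- minimal period
  have hperiodic : Function.IsPeriodicPt (⇑σ) (orderOf σ) x := by
    unfold Function.IsPeriodicPt Function.IsFixedPt
    rw [← Equiv.Perm.coe_pow, pow_orderOf_eq_one]
    rfl
  set n := Function.minimalPeriod (⇑σ) x with hn
  have hnpos : 0 < n := hperiodic.minimalPeriod_pos (orderOf_pos σ)
  have hper : (⇑σ)^[n] x = x := Function.iterate_minimalPeriod
  have hinj : Set.InjOn (fun i => (⇑σ)^[i] x) (Set.Iio n) :=
    Function.iterate_injOn_Iio_minimalPeriod
  have hσx : σ x ≠ x := by
    intro hfix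
    rw [hσap, ← hvy] at hfix
    have hy2 : y ∈ evF N₂ := by
      rw [← hW, hvy]; exact pf_mem hvx
    have := pf_eq_of_edge h₂ (pf_edge hy2) (Sym2.mem_mk_left _ _)
    rw [hfix] at this
    have hedge : s(y, x) ∈ N₂ := by
      have h3 := pf_edge hy2
      rwa [hfix] at h3
    rw [Sym2.eq_swap] at hedge
    exact he₂ hedge
  have hn2 : 2 ≤ n := by
    by_contra hlt
    push_neg at hlt
    have hn1 : n = 1 := by omega
    apply hσx
    have hh := hper
    rw [hn1] at hh
    simpa using hh
  have hnofix : ∀ i, i < n → σ ((⇑σ)^[i] x) ≠ (⇑σ)^[i] x := by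
    intro i hi hfix
    have hfix' : (⇑σ)^[i+1] x = (⇑σ)^[i] x := by
      rw [Function.iterate_succ_apply']; exact hfix
    rcases Nat.lt_or_ge (i+1) n with hlt | hge
    · have := hinj (Set.mem_Iio.2 hlt) (Set.mem_Iio.2 hi) hfix'
      omega
    · have hieq : i + 1 = n := by omega
      have h0 : (⇑σ)^[i] x = (⇑σ)^[0] x := by
        have hxx : (⇑σ)^[n] x = (⇑σ)^[i] x := by rw [← hieq, hfix']
        rw [Function.iterate_zero_apply]
        calc (⇑σ)^[i] x = (⇑σ)^[n] x := hxx.symm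
        _ = x := hper
      have := hinj (Set.mem_Iio.2 hi) (Set.mem_Iio.2 hnpos) h0
      omega
  -- the cyclic vertex function
  set F : ℕ → V := fun j => if j % 2 = 0 then (⇑σ)^[j / 2] x else pf N₁ ((⇑σ)^[j / 2] x)
    with hF
  have hF0 : F 0 = x := by simp [hF]
  have hFeven : ∀ i, F (2 * i) = (⇑σ)^[i] x := by
    intro i
    have h1 : (2 * i) % 2 = 0 := by omega
    have h2 : (2 * i) / 2 = i := by omega
    simp only [hF]
    rw [if_pos h1, h2]
  have hFodd : ∀ i, F (2 * i + 1) = pf N₁ ((⇑σ)^[i] x) := by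
    intro i
    have h1 : ¬ ((2 * i + 1) % 2 = 0) := by omega
    have h2 : (2 * i + 1) / 2 = i := by omega
    simp only [hF]
    rw [if_neg h1, h2]
  have hF2n : F (2 * n) = x := by rw [hFeven, hper]
  have hFcov : ∀ j, F j ∈ evF N₁ := by
    intro j
    rw [hF]
    by_cases hp : j % 2 = 0
    · simp only [if_pos hp]; exact hit _
    · simp only [if_neg hp]; exact pf_mem (hit _)
  have hFcol0 : ∀ j, j % 2 = 0 → c (F j) = c x := by
    intro j hp
    rw [hF]; simp only [if_pos hp]; exact hcoli _
  have hFcol1 : ∀ j, j % 2 = 1 → c (F j) ≠ c x := by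
    intro j hp
    rw [hF]
    simp only [hp]
    norm_num
    rw [← hcoli (j / 2)]
    exact hcol1 _ (hit _)
  -- edges
  have hedge_even : ∀ i, s(F (2 * i), F (2 * i + 1)) ∈ N₁ := by
    intro i
    rw [hFeven, hFodd]
    exact pf_edge (hit i)
  have hσstep : ∀ i, (⇑σ)^[i + 1] x = pf N₂ (pf N₁ ((⇑σ)^[i] x)) := by
    intro i
    rw [Function.iterate_succ_apply', hσap]
  have hedge_odd : ∀ i, s(F (2 * i + 1), F (2 * i + 2)) ∈ N₂ := by
    intro i
    have h22 : 2 * i + 2 = 2 * (i + 1) := by omega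
    rw [hFodd, h22, hFeven, hσstep]
    have hy' : pf N₁ ((⇑σ)^[i] x) ∈ evF N₂ := by rw [← hW]; exact pf_mem (hit i)
    exact pf_edge hy'
  have hadj : ∀ j, G.Adj (F j) (F (j + 1)) := by
    intro j
    rcases Nat.even_or_odd j with hp | hp
    · obtain ⟨i, rfl⟩ := hp
      have h2i : i + i = 2 * i := by omega
      rw [h2i]
      have := h₁.1 (hedge_even i)
      rwa [SimpleGraph.mem_edgeSet] at this
    · obtain ⟨i, rfl⟩ := hp
      have := h₂.1 (hedge_odd i)
      rw [SimpleGraph.mem_edgeSet] at this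
      have he' : 2 * i + 1 + 1 = 2 * i + 2 := by omega
      rw [he']
      exact this
  -- cannot cross between the matchings
  have hN2even : ∀ i, i < n → s(F (2 * i), F (2 * i + 1)) ∉ N₂ := by
    intro i hi hmem
    rw [hFeven, hFodd] at hmem
    set v := (⇑σ)^[i] x with hv
    have hv2 : v ∈ evF N₂ := by rw [← hW]; exact hit i
    have := pf_eq_of_edge h₂ hmem (Sym2.mem_mk_left _ _)
    have hpp : pf N₂ v = pf N₁ v := Sym2.congr_right.1 this
    apply hnofix i hi
    rw [hσap, ← hpp]
    exact (pf_invol h₂) v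
  have hN1odd : ∀ i, i < n → s(F (2 * i + 1), F (2 * i + 2)) ∉ N₁ := by
    intro i hi hmem
    have h22 : 2 * i + 2 = 2 * (i + 1) := by omega
    rw [hFodd, h22, hFeven, hσstep] at hmem
    set v := (⇑σ)^[i] x with hv
    set y' := pf N₁ v with hy'
    have hy'1 : y' ∈ evF N₁ := pf_mem (hit i)
    have := pf_eq_of_edge h₁ hmem (Sym2.mem_mk_left _ _)
    have hpp : pf N₁ y' = pf N₂ y' := Sym2.congr_right.1 this
    apply hnofix i hi
    rw [hσap, ← hv, ← hy', ← hpp, hy']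
    exact (pf_invol h₁) v
  -- build the cycle walk
  set l : List V := (List.range (2 * n - 1)).map (fun j => F (j + 1)) with hl
  have hxl : x :: l = (List.range (2 * n)).map F := by
    have h2n : 2 * n = (2 * n - 1) + 1 := by omega
    rw [hl, h2n, List.range_succ_eq_map, List.map_cons, List.map_map]
    rw [hF0]
    rfl
  have hlx : l ++ [x] = (List.range (2 * n)).map (fun j => F (j + 1)) := by
    have h2n : 2 * n = (2 * n - 1) + 1 := by omega
    rw [hl, h2n, List.range_succ, List.map_append]
    congr 1
    simp only [List.map_cons, List.map_nil]
    congr 1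
    rw [show 2 * n - 1 + 1 = 2 * n from by omega, hF2n]
  have hFinj : ∀ j j', j < 2 * n → j' < 2 * n → F j = F j' → j = j' := by
    intro j j' hj hj' heq
    have hpar : j % 2 = j' % 2 := by
      by_contra hne
      rcases Nat.even_or_odd j with hp | hp
      · have hp' : j' % 2 = 1 := by
          have := Nat.even_iff.1 hp; omega
        have := hFcol1 j' hp'
        rw [← heq, hFcol0 j (Nat.even_iff.1 hp)] at this
        exact this rfl
      · have hpj : j % 2 = 1 := Nat.odd_iff.1 hp
        have hp' : j' % 2 = 0 := by omega
        have := hFcol1 j hpj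
        rw [heq, hFcol0 j' hp'] at this
        exact this rfl
    rcases Nat.even_or_odd j with hp | hp
    · have hj0 : j % 2 = 0 := Nat.even_iff.1 hp
      have hj'0 : j' % 2 = 0 := by omega
      rw [hF] at heq
      simp only [if_pos hj0, if_pos hj'0] at heq
      have := hinj (Set.mem_Iio.2 (show j / 2 < n by omega))
        (Set.mem_Iio.2 (show j' / 2 < n by omega)) heq
      omega
    · have hj1 : j % 2 = 1 := Nat.odd_iff.1 hp
      have hj'1 : j' % 2 = 1 := by omega
      rw [hF] at heq
      simp only [hj1, hj'1] at heq
      norm_num at heq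
      have heq2 := (pf_invol h₁).injective heq
      have := hinj (Set.mem_Iio.2 (show j / 2 < n by omega))
        (Set.mem_Iio.2 (show j' / 2 < n by omega)) heq2
      omega
  have hnd : (x :: l).Nodup := by
    rw [hxl]
    rw [List.nodup_map_iff_inj_on List.nodup_range]
    intro j hj j' hj' heq
    rw [List.mem_range] at hj hj'
    exact hFinj j j' hj hj' heq
  have hlen : 2 ≤ l.length := by
    rw [hl, List.length_map, List.length_range]
    omega
  have hch : List.Chain G.Adj x (l ++ [x]) := by
    rw [hlx, ← hF0]
    exact chain_of_fn G.Adj F (2 * n) (fun j _ => hadj j)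
  obtain ⟨w, hcyc, hwlen, hwedges⟩ := cycle_of_list G x l hnd hlen hch
  have hwlen2n : w.length = 2 * n := by
    rw [hwlen, hl, List.length_map, List.length_range]
    omega
  have hedges_map : w.edges = (List.range (2 * n)).map (fun j => s(F j, F (j + 1))) := by
    rw [hwedges, hxl, hlx, List.zipWith_map, List.zipWith_self]
  set Cy := w.edges.toFinset with hCy
  have hmemCy : ∀ {e : Sym2 V}, e ∈ Cy ↔ ∃ j < 2 * n, e = s(F j, F (j + 1)) := by
    intro e
    rw [hCy, List.mem_toFinset, hedges_map]
    simp only [List.mem_map, List.mem_range]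
    constructor
    · rintro ⟨j, hj, rfl⟩; exact ⟨j, hj, rfl⟩
    · rintro ⟨j, hj, rfl⟩; exact ⟨j, hj, rfl⟩
  have hCyEven : IsEvenCycleEdges G Cy := ⟨x, w, hcyc, by rw [hwlen2n]; exact ⟨n, by omega⟩, rfl⟩
  -- edge membership in halves
  have hevenCy : ∀ i, i < n → s(F (2 * i), F (2 * i + 1)) ∈ Cy := by
    intro i hi
    exact hmemCy.2 ⟨2 * i, by omega, rfl⟩
  have hoddCy : ∀ i, i < n → s(F (2 * i + 1), F (2 * i + 2)) ∈ Cy := by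
    intro i hi
    refine hmemCy.2 ⟨2 * i + 1, by omega, ?_⟩
    congr 1
  have hA : N₁ ∩ Cy = (Finset.range n).image (fun i => s(F (2 * i), F (2 * i + 1))) := by
    apply Finset.Subset.antisymm
    · intro e he
      rw [Finset.mem_inter] at he
      obtain ⟨j, hj, rfl⟩ := hmemCy.1 he.2
      rcases Nat.even_or_odd j with hp | hp
      · have hj0 : j = 2 * (j / 2) := by
          have := Nat.even_iff.1 hp; omega
        rw [Finset.mem_image]
        exact ⟨j / 2, Finset.mem_range.2 (by omega), by rw [← hj0]⟩
      · exfalso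
        obtain ⟨i, rfl⟩ : ∃ i, j = 2 * i + 1 := ⟨j / 2, by have := Nat.odd_iff.1 hp; omega⟩
        apply hN1odd i (by omega)
        exact he.1
    · intro e he
      rw [Finset.mem_image] at he
      obtain ⟨i, hi, rfl⟩ := he
      rw [Finset.mem_range] at hi
      exact Finset.mem_inter.2 ⟨hedge_even i, hevenCy i hi⟩
  have hB : N₂ ∩ Cy = (Finset.range n).image (fun i => s(F (2 * i + 1), F (2 * i + 2))) := by
    apply Finset.Subset.antisymm
    · intro e he
      rw [Finset.mem_inter] at he
      obtain ⟨j, hj, rfl⟩ := hmemCy.1 he.2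
      rcases Nat.even_or_odd j with hp | hp
      · exfalso
        obtain ⟨i, rfl⟩ : ∃ i, j = 2 * i := ⟨j / 2, by have := Nat.even_iff.1 hp; omega⟩
        apply hN2even i (by omega)
        exact he.1
      · obtain ⟨i, rfl⟩ : ∃ i, j = 2 * i + 1 := ⟨j / 2, by have := Nat.odd_iff.1 hp; omega⟩
        rw [Finset.mem_image]
        exact ⟨i, Finset.mem_range.2 (by omega), rfl⟩
    · intro e he
      rw [Finset.mem_image] at he
      obtain ⟨i, hi, rfl⟩ := he
      rw [Finset.mem_range] at hi
      exact Finset.mem_inter.2 ⟨hedge_odd i, hoddCy i hi⟩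
  -- vertices of Cy are the F j for j < 2n
  have hvCy : ∀ v, v ∈ evF Cy → ∃ r < 2 * n, v = F r := by
    intro v hv
    obtain ⟨e, he, hve⟩ := mem_evF.1 hv
    obtain ⟨j, hj, rfl⟩ := hmemCy.1 he
    rw [Sym2.mem_iff] at hve
    rcases hve with rfl | rfl
    · exact ⟨j, hj, rfl⟩
    · rcases Nat.lt_or_ge (j + 1) (2 * n) with hlt | hge
      · exact ⟨j + 1, hlt, rfl⟩
      · have : j + 1 = 2 * n := by omega
        refine ⟨0, by omega, ?_⟩
        rw [this, hF2n, hF0]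
  refine ⟨Cy, hCyEven, ?_, ⟨Finset.inter_subset_right, matching_subset h₁ Finset.inter_subset_left, ?_⟩,
    ⟨Finset.inter_subset_right, matching_subset h₂ Finset.inter_subset_left, ?_⟩, ?_, ?_⟩
  · -- e₀ ∈ Cy
    refine hmemCy.2 ⟨0, by omega, ?_⟩
    rw [hF0, show (0:ℕ) + 1 = 2 * 0 + 1 from rfl, hFodd]
    simp only [Function.iterate_zero_apply]
    rw [← hvy]
  · -- evF (N₁ ∩ Cy) = evF Cy
    apply Finset.Subset.antisymm (evF_mono Finset.inter_subset_right)
    intro v hv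
    obtain ⟨r, hr, rfl⟩ := hvCy v hv
    rw [mem_evF]
    rcases Nat.even_or_odd r with hp | hp
    · have hr0 : r = 2 * (r / 2) := by
        have := Nat.even_iff.1 hp; omega
      refine ⟨s(F (2 * (r/2)), F (2 * (r/2) + 1)), ?_, ?_⟩
      · rw [Finset.mem_inter]
        exact ⟨hedge_even _, hevenCy _ (by omega)⟩
      · rw [← hr0]; exact Sym2.mem_mk_left _ _
    · have hr1 : r = 2 * (r / 2) + 1 := by
        have := Nat.odd_iff.1 hp; omega
      refine ⟨s(F (2 * (r/2)), F (2 * (r/2) + 1)), ?_, ?_⟩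
      · rw [Finset.mem_inter]
        exact ⟨hedge_even _, hevenCy _ (by omega)⟩
      · rw [← hr1]; exact Sym2.mem_mk_right _ _
  · -- evF (N₂ ∩ Cy) = evF Cy
    apply Finset.Subset.antisymm (evF_mono Finset.inter_subset_right)
    intro v hv
    obtain ⟨r, hr, rfl⟩ := hvCy v hv
    rw [mem_evF]
    rcases Nat.even_or_odd r with hp | hp
    · rcases Nat.eq_zero_or_pos r with rfl | hrpos
      · refine ⟨s(F (2 * (n-1) + 1), F (2 * (n-1) + 2)), ?_, ?_⟩
        · rw [Finset.mem_inter]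
          exact ⟨hedge_odd _, hoddCy _ (by omega)⟩
        · have : 2 * (n - 1) + 2 = 2 * n := by omega
          rw [this, hF2n, hF0]
          exact Sym2.mem_mk_right _ _
      · have hr0 : r = 2 * ((r-2) / 2) + 2 := by
          have := Nat.even_iff.1 hp; omega
        refine ⟨s(F (2 * ((r-2)/2) + 1), F (2 * ((r-2)/2) + 2)), ?_, ?_⟩
        · rw [Finset.mem_inter]
          exact ⟨hedge_odd _, hoddCy _ (by omega)⟩
        · rw [← hr0]; exact Sym2.mem_mk_right _ _
    · have hr1 : r = 2 * (r / 2) + 1 := by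
        have := Nat.odd_iff.1 hp; omega
      refine ⟨s(F (2 * (r/2) + 1), F (2 * (r/2) + 2)), ?_, ?_⟩
      · rw [Finset.mem_inter]
        exact ⟨hedge_odd _, hoddCy _ (by omega)⟩
      · rw [← hr1]; exact Sym2.mem_mk_left _ _
  · -- disjoint
    rw [Finset.eq_empty_iff_forall_notMem]
    intro e he
    rw [Finset.mem_inter] at he
    obtain ⟨heA, heB⟩ := he
    rw [hA] at heA
    rw [Finset.mem_image] at heA
    obtain ⟨i, hi, rfl⟩ := heA
    rw [Finset.mem_range] at hi
    have := (Finset.mem_inter.1 heB).1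
    exact hN2even i hi this
  · -- union
    apply Finset.Subset.antisymm
    · intro e he
      rw [Finset.mem_union, Finset.mem_inter, Finset.mem_inter] at he
      rcases he with he | he <;> exact he.2
    · intro e he
      obtain ⟨j, hj, rfl⟩ := hmemCy.1 he
      rw [Finset.mem_union, Finset.mem_inter, Finset.mem_inter]
      rcases Nat.even_or_odd j with hp | hp
      · left
        have hj0 : j = 2 * (j / 2) := by
          have := Nat.even_iff.1 hp; omega
        rw [hj0]
        exact ⟨hedge_even _, hevenCy _ (by omega)⟩
      · right
        have hj1 : j = 2 * (j / 2) + 1 := by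
          have := Nat.odd_iff.1 hp; omega
        constructor
        · rw [hj1, show 2 * (j/2) + 1 + 1 = 2 * (j/2) + 2 from rfl]
          exact hedge_odd _
        · rw [hj1, show 2 * (j/2) + 1 + 1 = 2 * (j/2) + 2 from rfl]
          exact hoddCy _ (by omega)

end St10


open Polynomial
open scoped Classical
set_option linter.unusedSectionVars false
set_option maxHeartbeats 1000000

namespace St10

variable {V : Type} [Fintype V] [DecidableEq V] {G : SimpleGraph V}

noncomputable def eIdx : Sym2 V → ℕ := fun e => ((Fintype.equivFin (Sym2 V)) e : ℕ)

lemma eIdx_inj : Function.Injective (eIdx (V := V)) := by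
  intro e f h
  have := Fin.val_injective h
  exact (Fintype.equivFin (Sym2 V)).injective this

lemma eIdx_lt (e : Sym2 V) : eIdx e < Fintype.card (Sym2 V) := ((Fintype.equivFin (Sym2 V)) e).2

/-- `H` contains an edge of minimal index among all edges of `Cy`. -/
def HasMin (Cy H : Finset (Sym2 V)) : Prop :=
  ∃ e ∈ H, ∀ f ∈ Cy, eIdx e ≤ eIdx f

lemma halves_disj_of_diff (hb : G.Colorable 2) (hc : IsCactus G) {Cy A B : Finset (Sym2 V)}
    (hCy : IsEvenCycleEdges G Cy) (hA : IsHalf G Cy A) (hB : IsHalf G Cy B)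
    {e₀ : Sym2 V} (he₀A : e₀ ∈ A) (he₀B : e₀ ∉ B) : A ∩ B = ∅ := by
  have hWW : evF A = evF B := by rw [hA.2.2, hB.2.2]
  obtain ⟨Cy', hCy', he₀', hA', hB', hdisj, hun⟩ := master hb hA.2.1 hB.2.1 hWW he₀A he₀B
  have hCyeq : Cy' = Cy :=
    hc Cy' Cy (evenCyc_isCyc hCy') (evenCyc_isCyc hCy) e₀ he₀' (hA.1 he₀A)
  rw [hCyeq] at hdisj
  rwa [Finset.inter_eq_left.2 hA.1, Finset.inter_eq_left.2 hB.1] at hdisj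

lemma half_share (hb : G.Colorable 2) (hc : IsCactus G) {Cy H H' : Finset (Sym2 V)}
    (hCy : IsEvenCycleEdges G Cy) (hH : IsHalf G Cy H) (hH' : IsHalf G Cy H')
    {e : Sym2 V} (he : e ∈ H) (he' : e ∈ H') : H = H' := by
  by_cases hsub : H ⊆ H'
  · by_cases hsub' : H' ⊆ H
    · exact Finset.Subset.antisymm hsub hsub'
    · obtain ⟨f, hf, hf'⟩ := Finset.not_subset.1 hsub'
      exfalso
      have hd := halves_disj_of_diff hb hc hCy hH' hH hf hf'
      have hmem : e ∈ H' ∩ H := Finset.mem_inter.2 ⟨he', he⟩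
      rw [hd] at hmem
      simp at hmem
  · obtain ⟨f, hf, hf'⟩ := Finset.not_subset.1 hsub
    exfalso
    have hd := halves_disj_of_diff hb hc hCy hH hH' hf hf'
    have hmem : e ∈ H ∩ H' := Finset.mem_inter.2 ⟨he, he'⟩
    rw [hd] at hmem
    simp at hmem

noncomputable def halfOf (G : SimpleGraph V) (Cy : Finset (Sym2 V)) : Finset (Sym2 V) :=
  if h : ∃ H, IsHalf G Cy H ∧ HasMin Cy H then h.choose else ∅

lemma halfOf_spec {Cy : Finset (Sym2 V)} (hCy : IsEvenCycleEdges G Cy) :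
    IsHalf G Cy (halfOf G Cy) ∧ HasMin Cy (halfOf G Cy) := by
  obtain ⟨H0, H1, hH0, hH1, hd, hu⟩ := exists_halves hCy
  obtain ⟨em, hem, hmin⟩ := Finset.exists_min_image Cy eIdx (cyc_nonempty (evenCyc_isCyc hCy))
  have hex : ∃ H, IsHalf G Cy H ∧ HasMin Cy H := by
    have : em ∈ H0 ∪ H1 := hu ▸ hem
    rcases Finset.mem_union.1 this with h | h
    · exact ⟨H0, hH0, em, h, hmin⟩
    · exact ⟨H1, hH1, em, h, hmin⟩
  rw [halfOf, dif_pos hex]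
  exact hex.choose_spec

lemma half_eq_halfOf (hb : G.Colorable 2) (hc : IsCactus G) {Cy H : Finset (Sym2 V)}
    (hCy : IsEvenCycleEdges G Cy) (hH : IsHalf G Cy H) (hmin : HasMin Cy H) :
    H = halfOf G Cy := by
  obtain ⟨hhalf, e', he', hmin'⟩ := halfOf_spec hCy
  obtain ⟨e, he, hemin⟩ := hmin
  have h1 : eIdx e ≤ eIdx e' := hemin e' (hhalf.1 he')
  have h2 : eIdx e' ≤ eIdx e := hmin' e (hH.1 he)
  have : e = e' := eIdx_inj (le_antisymm h1 h2)
  exact half_share hb hc hCy hH hhalf he (this ▸ he')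

lemma other_half (hb : G.Colorable 2) (hc : IsCactus G) {Cy : Finset (Sym2 V)}
    (hCy : IsEvenCycleEdges G Cy) : IsHalf G Cy (Cy \ halfOf G Cy) := by
  obtain ⟨H0, H1, hH0, hH1, hd, hu⟩ := exists_halves hCy
  obtain ⟨hhalf, e', he', _⟩ := halfOf_spec hCy
  have he'Cy : e' ∈ Cy := hhalf.1 he'
  have : e' ∈ H0 ∪ H1 := hu ▸ he'Cy
  rcases Finset.mem_union.1 this with h | h
  · have heq : halfOf G Cy = H0 := half_share hb hc hCy hhalf hH0 he' h
    have hcompl : Cy \ halfOf G Cy = H1 := by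
      rw [heq]
      apply Finset.Subset.antisymm
      · intro f hf
        rw [Finset.mem_sdiff] at hf
        have : f ∈ H0 ∪ H1 := hu ▸ hf.1
        rcases Finset.mem_union.1 this with h' | h'
        · exact absurd h' hf.2
        · exact h'
      · intro f hf
        rw [Finset.mem_sdiff]
        refine ⟨hH1.1 hf, fun hf0 => ?_⟩
        have : f ∈ H0 ∩ H1 := Finset.mem_inter.2 ⟨hf0, hf⟩
        rw [hd] at this
        simp at this
    rw [hcompl]
    exact hH1
  · have heq : halfOf G Cy = H1 := half_share hb hc hCy hhalf hH1 he' h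
    have hcompl : Cy \ halfOf G Cy = H0 := by
      rw [heq]
      apply Finset.Subset.antisymm
      · intro f hf
        rw [Finset.mem_sdiff] at hf
        have : f ∈ H0 ∪ H1 := hu ▸ hf.1
        rcases Finset.mem_union.1 this with h' | h'
        · exact h'
        · exact absurd h' hf.2
      · intro f hf
        rw [Finset.mem_sdiff]
        refine ⟨hH0.1 hf, fun hf0 => ?_⟩
        have : f ∈ H0 ∩ H1 := Finset.mem_inter.2 ⟨hf, hf0⟩
        rw [hd] at this
        simp at this
    rw [hcompl]
    exact hH0

/-- If two matchings cover the same vertices and neither has a canonical cycle, they are equal. -/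
lemma no_active_unique (hb : G.Colorable 2) (hc : IsCactus G) {M₁ M₂ : Finset (Sym2 V)}
    (h₁ : IsGMatching G M₁) (h₂ : IsGMatching G M₂) (hW : evF M₁ = evF M₂)
    (hna₁ : ∀ Cy, IsEvenCycleEdges G Cy → M₁ ∩ Cy ≠ halfOf G Cy)
    (hna₂ : ∀ Cy, IsEvenCycleEdges G Cy → M₂ ∩ Cy ≠ halfOf G Cy) : M₁ = M₂ := by
  have key : ∀ (A B : Finset (Sym2 V)), IsGMatching G A → IsGMatching G B →
      evF A = evF B →
      (∀ Cy, IsEvenCycleEdges G Cy → A ∩ Cy ≠ halfOf G Cy) →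
      (∀ Cy, IsEvenCycleEdges G Cy → B ∩ Cy ≠ halfOf G Cy) →
      ∀ e₀, e₀ ∈ A → e₀ ∈ B := by
    intro A B hA hB hWW hnaA hnaB e₀ he₀
    by_contra he₀B
    obtain ⟨Cy, hCy, he₀', hhA, hhB, hdisj, hun⟩ := master hb hA hB hWW he₀ he₀B
    obtain ⟨em, hem, hmin⟩ := Finset.exists_min_image Cy eIdx (cyc_nonempty (evenCyc_isCyc hCy))
    have : em ∈ (A ∩ Cy) ∪ (B ∩ Cy) := by rw [hun]; exact hem
    rcases Finset.mem_union.1 this with h | h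
    · exact hnaA Cy hCy (half_eq_halfOf hb hc hCy hhA ⟨em, h, hmin⟩)
    · exact hnaB Cy hCy (half_eq_halfOf hb hc hCy hhB ⟨em, h, hmin⟩)
  apply Finset.Subset.antisymm
  · intro e he; exact key M₁ M₂ h₁ h₂ hW hna₁ hna₂ e he
  · intro e he; exact key M₂ M₁ h₂ h₁ hW.symm hna₂ hna₁ e he

/-! ### Weights -/

noncomputable def wt (N : Finset (Sym2 V)) : ℕ :=
  ∑ e ∈ N, 2 ^ (Fintype.card (Sym2 V) - eIdx e)

lemma two_pow_sum : ∀ k : ℕ, (∑ x ∈ Finset.range k, 2 ^ x) = 2 ^ k - 1 := by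
  intro k
  induction k with
  | zero => simp
  | succ k ih =>
    rw [Finset.sum_range_succ, ih]
    have h1 : 1 ≤ 2 ^ k := Nat.one_le_two_pow
    have h2 : 2 ^ (k + 1) = 2 * 2 ^ k := by ring
    omega

lemma powsum_lt {S : Finset (Sym2 V)} {m : ℕ}
    (h : ∀ f ∈ S, m < eIdx f) :
    (∑ f ∈ S, 2 ^ (Fintype.card (Sym2 V) - eIdx f)) < 2 ^ (Fintype.card (Sym2 V) - m) := by
  set D := Fintype.card (Sym2 V) with hD
  have hsum : (∑ f ∈ S, 2 ^ (D - eIdx f)) =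
      ∑ x ∈ S.image (fun f => D - eIdx f), 2 ^ x := by
    rw [Finset.sum_image]
    intro f hf g hg hfg
    have hf' := eIdx_lt f
    have hg' := eIdx_lt g
    apply eIdx_inj
    simp only at hfg
    omega
  rw [hsum]
  have hsub : S.image (fun f => D - eIdx f) ⊆ Finset.range (D - m) := by
    intro x hx
    rw [Finset.mem_image] at hx
    obtain ⟨f, hf, rfl⟩ := hx
    rw [Finset.mem_range]
    have h1 := h f hf
    have h2 := eIdx_lt f
    omega
  calc (∑ x ∈ S.image (fun f => D - eIdx f), 2 ^ x)
      ≤ ∑ x ∈ Finset.range (D - m), 2 ^ x := by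
        apply Finset.sum_le_sum_of_subset hsub
    _ = 2 ^ (D - m) - 1 := two_pow_sum _
    _ < 2 ^ (D - m) := by
        have : 1 ≤ 2 ^ (D - m) := Nat.one_le_two_pow
        omega

/-- Flipping a canonically-matched cycle: preserves matching/vertex set/cardinality,
strictly decreases weight. -/
lemma flip_wt (hb : G.Colorable 2) (hc : IsCactus G) {M Cy : Finset (Sym2 V)}
    (hM : IsGMatching G M) (hCy : IsEvenCycleEdges G Cy) (hact : M ∩ Cy = halfOf G Cy) :
    IsGMatching G ((M \ halfOf G Cy) ∪ (Cy \ halfOf G Cy)) ∧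
    evF ((M \ halfOf G Cy) ∪ (Cy \ halfOf G Cy)) = evF M ∧
    ((M \ halfOf G Cy) ∪ (Cy \ halfOf G Cy)).card = M.card ∧
    wt ((M \ halfOf G Cy) ∪ (Cy \ halfOf G Cy)) < wt M := by
  obtain ⟨hhalf, hmin⟩ := halfOf_spec hCy
  have hother : IsHalf G Cy (Cy \ halfOf G Cy) := other_half hb hc hCy
  have hsubM : halfOf G Cy ⊆ M := by
    rw [← hact]; exact Finset.inter_subset_left
  have hMsplit : (M \ halfOf G Cy) ∪ halfOf G Cy = M := Finset.sdiff_union_of_subset hsubM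
  have hdisjM : Disjoint (M \ halfOf G Cy) (halfOf G Cy) := Finset.sdiff_disjoint
  -- edges of M outside the half avoid the cycle's vertices
  have havoid : ∀ f ∈ M \ halfOf G Cy, ∀ v, v ∈ f → v ∉ evF Cy := by
    intro f hf v hvf hvCy
    rw [Finset.mem_sdiff] at hf
    rw [← hhalf.2.2, mem_evF] at hvCy
    obtain ⟨g, hg, hvg⟩ := hvCy
    have : f = g := matching_unique hM hf.1 (hsubM hg) hvf hvg
    exact hf.2 (this ▸ hg)
  have hdisj2 : Disjoint (M \ halfOf G Cy) (Cy \ halfOf G Cy) := by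
    rw [Finset.disjoint_left]
    intro e he he'
    rw [Finset.mem_sdiff] at he he'
    have : e ∈ M ∩ Cy := Finset.mem_inter.2 ⟨he.1, he'.1⟩
    rw [hact] at this
    exact he.2 this
  constructor
  · -- matching
    refine ⟨?_, ?_⟩
    · intro e he
      rcases Finset.mem_union.1 he with h | h
      · exact hM.1 (Finset.mem_sdiff.1 h).1
      · exact (cycEdges_subset (evenCyc_isCyc hCy)) e (Finset.mem_sdiff.1 h).1
    · intro e he f hf hef v hv
      rw [Finset.coe_union, Set.mem_union] at he hf
      have hMsub : IsGMatching G (M \ halfOf G Cy) := matching_subset hM (Finset.sdiff_subset)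
      rcases he with he | he <;> rcases hf with hf | hf
      · exact hMsub.2 he hf hef v hv
      · exact havoid e he v hv.1 (by rw [← hother.2.2]; exact mem_evF.2 ⟨f, hf, hv.2⟩)
      · exact havoid f hf v hv.2 (by rw [← hother.2.2]; exact mem_evF.2 ⟨e, he, hv.1⟩)
      · exact hother.2.1.2 he hf hef v hv
  refine ⟨?_, ?_, ?_⟩
  · -- vertex set
    rw [evF_union, hother.2.2]
    conv_rhs => rw [← hMsplit, evF_union, hhalf.2.2]
  · -- cardinality
    rw [Finset.card_union_of_disjoint hdisj2]
    have h1 : (Cy \ halfOf G Cy).card = (halfOf G Cy).card := by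
      have hcard := half_card hCy hhalf
      have := Finset.card_sdiff_of_subset hhalf.1
      omega
    have h2 : M.card = (M \ halfOf G Cy).card + (halfOf G Cy).card := by
      rw [← Finset.card_union_of_disjoint hdisjM, hMsplit]
    omega
  · -- weight
    rw [wt, wt, Finset.sum_union hdisj2]
    conv_rhs => rw [← hMsplit, Finset.sum_union hdisjM]
    apply Nat.add_lt_add_left
    obtain ⟨em, hem, hemmin⟩ := hmin
    calc (∑ f ∈ Cy \ halfOf G Cy, 2 ^ (Fintype.card (Sym2 V) - eIdx f))
        < 2 ^ (Fintype.card (Sym2 V) - eIdx em) := by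
          apply powsum_lt
          intro f hf
          rw [Finset.mem_sdiff] at hf
          have h1 : eIdx em ≤ eIdx f := hemmin f hf.1
          have h2 : eIdx em ≠ eIdx f := by
            intro heq
            exact hf.2 (eIdx_inj heq ▸ hem)
          omega
      _ ≤ ∑ f ∈ halfOf G Cy, 2 ^ (Fintype.card (Sym2 V) - eIdx f) :=
          Finset.single_le_sum (f := fun f => 2 ^ (Fintype.card (Sym2 V) - eIdx f))
            (fun f _ => Nat.zero_le _) hem
end St10


open Polynomial
open scoped Classical
set_option linter.unusedSectionVars false
set_option maxHeartbeats 1000000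

namespace St10

variable {V : Type} [Fintype V] [DecidableEq V]

/-- condition on the cycle collection. -/
def nCond (G : SimpleGraph V) (R : Finset (Finset (Sym2 V))) : Prop :=
  (∀ C ∈ R, IsEvenCycleEdges G C) ∧
    (R : Set (Finset (Sym2 V))).Pairwise fun C₁ C₂ => Disjoint (edgeVerts C₁) (edgeVerts C₂)

def PairCond (G : SimpleGraph V) (n : ℕ)
    (p : Finset (Finset (Sym2 V)) × Finset (Sym2 V)) : Prop :=
  nCond G p.1 ∧ IsGMatching G p.2 ∧ (∀ v ∈ evF p.2, v ∉ evF (p.1.sup id)) ∧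
    p.2.card + ∑ C ∈ p.1, C.card / 2 = n

noncomputable def Pairs (G : SimpleGraph V) (n : ℕ) :
    Finset (Finset (Finset (Sym2 V)) × Finset (Sym2 V)) :=
  Finset.univ.filter (PairCond G n)

lemma mem_Pairs {G : SimpleGraph V} {n : ℕ} {p} : p ∈ Pairs G n ↔ PairCond G n p := by
  simp [Pairs]

lemma disjoint_evF_iff {C₁ C₂ : Finset (Sym2 V)} :
    Disjoint (edgeVerts C₁) (edgeVerts C₂) ↔ ∀ v, v ∈ evF C₁ → v ∉ evF C₂ := by
  rw [edgeVerts_eq_evF, edgeVerts_eq_evF, Finset.disjoint_coe]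
  exact Finset.disjoint_left

lemma mem_sup_evF {R : Finset (Finset (Sym2 V))} {v : V} :
    v ∈ evF (R.sup id) ↔ ∃ C ∈ R, v ∈ evF C := by
  rw [mem_evF]
  constructor
  · rintro ⟨e, he, hv⟩
    rw [Finset.mem_sup] at he
    obtain ⟨C, hC, heC⟩ := he
    exact ⟨C, hC, mem_evF.2 ⟨e, heC, hv⟩⟩
  · rintro ⟨C, hC, hv⟩
    obtain ⟨e, he, hv'⟩ := mem_evF.1 hv
    exact ⟨e, Finset.mem_sup.2 ⟨C, hC, he⟩, hv'⟩

lemma edge_has_vert (e : Sym2 V) : ∃ v, v ∈ e := by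
  induction e using Sym2.ind with
  | _ x y => exact ⟨x, Sym2.mem_mk_left _ _⟩

lemma cycles_edge_disjoint {G : SimpleGraph V} {R : Finset (Finset (Sym2 V))}
    (hR : nCond G R) {C : Finset (Sym2 V)} (hC : C ∈ R) {C' : Finset (Sym2 V)} (hC' : C' ∈ R)
    (hne : C ≠ C') : Disjoint C C' := by
  rw [Finset.disjoint_left]
  intro e he he'
  obtain ⟨v, hv⟩ := edge_has_vert e
  have h1 : v ∈ evF C := mem_evF.2 ⟨e, he, hv⟩
  have h2 : v ∈ evF C' := mem_evF.2 ⟨e, he', hv⟩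
  exact (disjoint_evF_iff.1 (hR.2 hC hC' hne)) v h1 h2

lemma sup_card_eq {G : SimpleGraph V} {R : Finset (Finset (Sym2 V))} (hR : nCond G R) :
    (R.sup id).card = ∑ C ∈ R, C.card := by
  classical
  induction R using Finset.induction_on with
  | empty => simp
  | @insert C R hCR ih =>
    have hR' : nCond G R := ⟨fun C' hC' => hR.1 C' (Finset.mem_insert_of_mem hC'),
      hR.2.mono (by simp [Finset.coe_insert, Set.subset_insert])⟩
    rw [Finset.sup_insert, Finset.sum_insert hCR, ← ih hR']
    rw [id]
    apply Finset.card_union_of_disjoint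
    rw [Finset.disjoint_left]
    intro e he he'
    rw [Finset.mem_sup] at he'
    obtain ⟨C', hC', heC'⟩ := he'
    have hne : C ≠ C' := fun h => hCR (h ▸ hC')
    have := cycles_edge_disjoint hR (Finset.mem_insert_self _ _)
      (Finset.mem_insert_of_mem hC') hne
    exact (Finset.disjoint_left.1 this) he heC'

lemma sup_half_eq {G : SimpleGraph V} {R : Finset (Finset (Sym2 V))} (hR : nCond G R) :
    (R.sup id).card / 2 = ∑ C ∈ R, C.card / 2 := by
  rw [sup_card_eq hR]
  have heven : ∀ C ∈ R, C.card = 2 * (C.card / 2) := by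
    intro C hC
    have := cyc_card_even (hR.1 C hC)
    obtain ⟨m, hm⟩ := this
    omega
  rw [Finset.sum_congr rfl heven, ← Finset.mul_sum]
  omega

/-- Active cycles for a pair. -/
noncomputable def ActC (G : SimpleGraph V)
    (p : Finset (Finset (Sym2 V)) × Finset (Sym2 V)) : Finset (Finset (Sym2 V)) :=
  Finset.univ.filter (fun C => C ∈ p.1 ∨ (IsEvenCycleEdges G C ∧ p.2 ∩ C = halfOf G C))

lemma mem_ActC {G : SimpleGraph V} {p} {C : Finset (Sym2 V)} :
    C ∈ ActC G p ↔ C ∈ p.1 ∨ (IsEvenCycleEdges G C ∧ p.2 ∩ C = halfOf G C) := by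
  simp [ActC]

noncomputable def cIdx : Finset (Sym2 V) → ℕ :=
  fun C => ((Fintype.equivFin (Finset (Sym2 V))) C : ℕ)

lemma cIdx_inj : Function.Injective (cIdx (V := V)) := by
  intro e f h
  exact (Fintype.equivFin (Finset (Sym2 V))).injective (Fin.val_injective h)

noncomputable def minA (S : Finset (Finset (Sym2 V))) : Finset (Sym2 V) :=
  if h : S.Nonempty then (Finset.exists_min_image S cIdx h).choose else ∅

lemma minA_spec {S : Finset (Finset (Sym2 V))} (h : S.Nonempty) :
    minA S ∈ S ∧ ∀ C ∈ S, cIdx (minA S) ≤ cIdx C := by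
  rw [minA, dif_pos h]
  obtain ⟨hmem, hmin⟩ := (Finset.exists_min_image S cIdx h).choose_spec
  exact ⟨hmem, hmin⟩

/-- The sign-reversing involution. -/
noncomputable def toggle (G : SimpleGraph V)
    (p : Finset (Finset (Sym2 V)) × Finset (Sym2 V)) :
    Finset (Finset (Sym2 V)) × Finset (Sym2 V) :=
  if (ActC G p).Nonempty then
    (if minA (ActC G p) ∈ p.1 then (p.1.erase (minA (ActC G p)), p.2 ∪ halfOf G (minA (ActC G p)))
     else (insert (minA (ActC G p)) p.1, p.2 \ halfOf G (minA (ActC G p))))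
  else p

end St10


open Polynomial
open scoped Classical
set_option linter.unusedSectionVars false
set_option maxHeartbeats 2000000

namespace St10

variable {V : Type} [Fintype V] [DecidableEq V]

lemma toggle_spec {G : SimpleGraph V} (hb : G.Colorable 2) (hc : IsCactus G) {n : ℕ}
    {p : Finset (Finset (Sym2 V)) × Finset (Sym2 V)}
    (hp : p ∈ Pairs G n) (hne : (ActC G p).Nonempty) :
    toggle G p ∈ Pairs G n ∧ ActC G (toggle G p) = ActC G p ∧
    toggle G (toggle G p) = p ∧
    ((toggle G p).1.card = p.1.card + 1 ∨ p.1.card = (toggle G p).1.card + 1) := by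
  obtain ⟨R, M⟩ := p
  obtain ⟨hR, hM, hMV, hcard⟩ := mem_Pairs.1 hp
  simp only at hR hM hMV hcard
  obtain ⟨hCact, hCmin⟩ := minA_spec hne
  set C := minA (ActC G (R, M)) with hCdef
  have hCeven : IsEvenCycleEdges G C := by
    rcases mem_ActC.1 hCact with h | h
    · exact hR.1 C h
    · exact h.1
  obtain ⟨hhalf, hminhalf⟩ := halfOf_spec hCeven
  set Hf := halfOf G C with hHfdef
  have hHfC : Hf ⊆ C := hhalf.1
  have hHfevF : evF Hf = evF C := hhalf.2.2
  have hHfcard : Hf.card = C.card / 2 := by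
    have := half_card hCeven hhalf
    omega
  have hint : ∀ C' : Finset (Sym2 V), IsEvenCycleEdges G C' → C' ≠ C → Hf ∩ C' = ∅ := by
    intro C' hC' hne'
    rw [Finset.eq_empty_iff_forall_notMem]
    intro e he
    rw [Finset.mem_inter] at he
    exact hne' (hc C' C (evenCyc_isCyc hC') (evenCyc_isCyc hCeven) e he.2 (hHfC he.1))
  by_cases hCR : C ∈ R
  · -- Case 1 : C is removed from R, its canonical half goes into M
    have htog : toggle G (R, M) = (R.erase C, M ∪ Hf) := by
      rw [toggle, if_pos hne, if_pos hCR]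
    have hMC : M ∩ C = ∅ := by
      rw [Finset.eq_empty_iff_forall_notMem]
      intro e he
      rw [Finset.mem_inter] at he
      obtain ⟨v, hv⟩ := edge_has_vert e
      exact hMV v (mem_evF.2 ⟨e, he.1, hv⟩) (mem_sup_evF.2 ⟨C, hCR, mem_evF.2 ⟨e, he.2, hv⟩⟩)
    have hMHf : Disjoint M Hf := by
      rw [Finset.disjoint_left]
      intro e he he'
      have : e ∈ M ∩ C := Finset.mem_inter.2 ⟨he, hHfC he'⟩
      rw [hMC] at this
      simp at this
    have hmatch' : IsGMatching G (M ∪ Hf) := by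
      constructor
      · intro e he
        rcases Finset.mem_union.1 he with h | h
        · exact hM.1 h
        · exact hhalf.2.1.1 h
      · intro e he f hf hef v hv
        rw [Finset.coe_union, Set.mem_union] at he hf
        rcases he with he | he <;> rcases hf with hf | hf
        · exact hM.2 he hf hef v hv
        · refine hMV v (mem_evF.2 ⟨e, he, hv.1⟩) ?_
          refine mem_sup_evF.2 ⟨C, hCR, ?_⟩
          rw [← hHfevF]
          exact mem_evF.2 ⟨f, hf, hv.2⟩
        · refine hMV v (mem_evF.2 ⟨f, hf, hv.2⟩) ?_
          refine mem_sup_evF.2 ⟨C, hCR, ?_⟩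
          rw [← hHfevF]
          exact mem_evF.2 ⟨e, he, hv.1⟩
        · exact hhalf.2.1.2 he hf hef v hv
    have hRE : nCond G (R.erase C) := by
      refine ⟨fun C' hC' => hR.1 C' (Finset.mem_of_mem_erase hC'), ?_⟩
      apply hR.2.mono
      simp only [Finset.coe_subset]
      exact Finset.erase_subset _ _
    have hvert' : ∀ v ∈ evF (M ∪ Hf), v ∉ evF ((R.erase C).sup id) := by
      intro v hv hvsup
      obtain ⟨C', hC', hvC'⟩ := mem_sup_evF.1 hvsup
      have hC'R : C' ∈ R := Finset.mem_of_mem_erase hC'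
      have hC'ne : C' ≠ C := (Finset.mem_erase.1 hC').1
      rw [evF_union, Finset.mem_union] at hv
      rcases hv with hv | hv
      · exact hMV v hv (mem_sup_evF.2 ⟨C', hC'R, hvC'⟩)
      · rw [hHfevF] at hv
        exact (disjoint_evF_iff.1 (hR.2 hCR hC'R (Ne.symm hC'ne))) v hv hvC'
    have hcard' : (M ∪ Hf).card + ∑ C' ∈ R.erase C, C'.card / 2 = n := by
      rw [Finset.card_union_of_disjoint hMHf]
      have hsum : (∑ C' ∈ R.erase C, C'.card / 2) + C.card / 2 = ∑ C' ∈ R, C'.card / 2 :=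
        Finset.sum_erase_add R _ hCR
      omega
    have hmem' : (R.erase C, M ∪ Hf) ∈ Pairs G n :=
      mem_Pairs.2 ⟨hRE, hmatch', hvert', hcard'⟩
    have hactinv : ActC G (R.erase C, M ∪ Hf) = ActC G (R, M) := by
      apply Finset.ext
      intro C'
      rw [mem_ActC, mem_ActC]
      simp only
      by_cases hC'C : C' = C
      · subst hC'C
        constructor
        · intro _; exact Or.inl hCR
        · intro _
          refine Or.inr ⟨hCeven, ?_⟩
          rw [Finset.union_inter_distrib_right, hMC, Finset.empty_union,
            Finset.inter_eq_left.2 hHfC]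
      · have hiff2 : ∀ (hev : IsEvenCycleEdges G C'), (M ∪ Hf) ∩ C' = M ∩ C' := by
          intro hev
          rw [Finset.union_inter_distrib_right, hint C' hev hC'C, Finset.union_empty]
        constructor
        · rintro (h | ⟨hev, heq⟩)
          · exact Or.inl (Finset.mem_of_mem_erase h)
          · exact Or.inr ⟨hev, by rw [← hiff2 hev]; exact heq⟩
        · rintro (h | ⟨hev, heq⟩)
          · exact Or.inl (Finset.mem_erase.2 ⟨hC'C, h⟩)
          · exact Or.inr ⟨hev, by rw [hiff2 hev]; exact heq⟩
    refine ⟨htog ▸ hmem', htog ▸ hactinv, ?_, ?_⟩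
    · rw [htog, toggle]
      have hne' : (ActC G (R.erase C, M ∪ Hf)).Nonempty := by rw [hactinv]; exact hne
      rw [if_pos hne']
      have hminA' : minA (ActC G (R.erase C, M ∪ Hf)) = C := by rw [hactinv]
      rw [hminA']
      have hnotin : C ∉ R.erase C := Finset.notMem_erase _ _
      rw [if_neg hnotin]
      have h1 : insert C (R.erase C) = R := Finset.insert_erase hCR
      have h2 : (M ∪ Hf) \ Hf = M := Finset.union_sdiff_cancel_right hMHf
      rw [h1, h2]
    · right
      rw [htog]
      simp only
      rw [Finset.card_erase_of_mem hCR]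
      have : 0 < R.card := Finset.card_pos.2 ⟨C, hCR⟩
      omega
  · -- Case 2 : C is added to R, its canonical half leaves M
    have hact : M ∩ C = Hf := by
      rcases mem_ActC.1 hCact with h | h
      · exact absurd h hCR
      · exact h.2
    have htog : toggle G (R, M) = (insert C R, M \ Hf) := by
      rw [toggle, if_pos hne, if_neg hCR]
    have hHfM : Hf ⊆ M := by
      rw [← hact]; exact Finset.inter_subset_left
    have hCdisj : ∀ C' ∈ R, Disjoint (edgeVerts C) (edgeVerts C') := by
      intro C' hC'
      rw [disjoint_evF_iff]
      intro v hv
      have hvHf : v ∈ evF Hf := by rw [hHfevF]; exact hv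
      have hvM : v ∈ evF M := evF_mono hHfM hvHf
      intro hvC'
      exact hMV v hvM (mem_sup_evF.2 ⟨C', hC', hvC'⟩)
    have hR' : nCond G (insert C R) := by
      constructor
      · intro C' hC'
        rcases Finset.mem_insert.1 hC' with rfl | h
        · exact hCeven
        · exact hR.1 C' h
      · rw [Finset.coe_insert]
        rw [Set.pairwise_insert]
        refine ⟨hR.2, ?_⟩
        intro C' hC' hne'
        exact ⟨hCdisj C' hC', (hCdisj C' hC').symm⟩
    have hmatch' : IsGMatching G (M \ Hf) := matching_subset hM Finset.sdiff_subset
    have hvert' : ∀ v ∈ evF (M \ Hf), v ∉ evF ((insert C R).sup id) := by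
      intro v hv hvsup
      obtain ⟨C', hC', hvC'⟩ := mem_sup_evF.1 hvsup
      rcases Finset.mem_insert.1 hC' with rfl | hC'R
      · -- v is covered by the half inside M and also by an edge of M \ Hf : contradiction
        rw [← hHfevF, mem_evF] at hvC'
        obtain ⟨e, he, hve⟩ := hvC'
        obtain ⟨f, hf, hvf⟩ := mem_evF.1 hv
        rw [Finset.mem_sdiff] at hf
        have : f = e := matching_unique hM hf.1 (hHfM he) hvf hve
        exact hf.2 (this ▸ he)
      · exact hMV v (evF_mono Finset.sdiff_subset hv) (mem_sup_evF.2 ⟨C', hC'R, hvC'⟩)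
    have hcard' : (M \ Hf).card + ∑ C' ∈ insert C R, C'.card / 2 = n := by
      have h1 : (M \ Hf).card + Hf.card = M.card := Finset.card_sdiff_add_card_eq_card hHfM
      rw [Finset.sum_insert hCR]
      omega
    have hmem' : (insert C R, M \ Hf) ∈ Pairs G n :=
      mem_Pairs.2 ⟨hR', hmatch', hvert', hcard'⟩
    have hactinv : ActC G (insert C R, M \ Hf) = ActC G (R, M) := by
      apply Finset.ext
      intro C'
      rw [mem_ActC, mem_ActC]
      simp only
      by_cases hC'C : C' = C
      · subst hC'C
        constructor
        · intro _; exact Or.inr ⟨hCeven, hact⟩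
        · intro _; exact Or.inl (Finset.mem_insert_self _ _)
      · have hiff2 : ∀ (hev : IsEvenCycleEdges G C'), (M \ Hf) ∩ C' = M ∩ C' := by
          intro hev
          apply Finset.ext
          intro e
          rw [Finset.mem_inter, Finset.mem_inter, Finset.mem_sdiff]
          constructor
          · rintro ⟨⟨heM, _⟩, heC'⟩; exact ⟨heM, heC'⟩
          · rintro ⟨heM, heC'⟩
            refine ⟨⟨heM, fun heHf => ?_⟩, heC'⟩
            have : e ∈ Hf ∩ C' := Finset.mem_inter.2 ⟨heHf, heC'⟩
            rw [hint C' hev hC'C] at this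
            simp at this
        constructor
        · rintro (h | ⟨hev, heq⟩)
          · rcases Finset.mem_insert.1 h with rfl | h'
            · exact absurd rfl hC'C
            · exact Or.inl h'
          · exact Or.inr ⟨hev, by rw [← hiff2 hev]; exact heq⟩
        · rintro (h | ⟨hev, heq⟩)
          · exact Or.inl (Finset.mem_insert_of_mem h)
          · exact Or.inr ⟨hev, by rw [hiff2 hev]; exact heq⟩
    refine ⟨htog ▸ hmem', htog ▸ hactinv, ?_, ?_⟩
    · rw [htog, toggle]
      have hne' : (ActC G (insert C R, M \ Hf)).Nonempty := by rw [hactinv]; exact hne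
      rw [if_pos hne']
      have hminA' : minA (ActC G (insert C R, M \ Hf)) = C := by rw [hactinv]
      rw [hminA']
      have hin : C ∈ insert C R := Finset.mem_insert_self _ _
      rw [if_pos hin]
      have h1 : (insert C R).erase C = R := Finset.erase_insert hCR
      have h2 : (M \ Hf) ∪ Hf = M := Finset.sdiff_union_of_subset hHfM
      rw [h1, h2]
    · left
      rw [htog]
      simp only
      rw [Finset.card_insert_of_notMem hCR]
end St10


open Polynomial
open scoped Classical
set_option linter.unusedSectionVars false
set_option maxHeartbeats 1000000

namespace St10

variable {V : Type} [Fintype V] [DecidableEq V]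

noncomputable def FibM (G : SimpleGraph V) (R : Finset (Finset (Sym2 V))) (n : ℕ) :
    Finset (Finset (Sym2 V)) :=
  Finset.univ.filter (fun M => IsGMatching G M ∧ (∀ v ∈ evF M, v ∉ evF (R.sup id)) ∧
    M.card + ∑ C ∈ R, C.card / 2 = n)

noncomputable def RSet (G : SimpleGraph V) : Finset (Finset (Finset (Sym2 V))) :=
  Finset.univ.filter (fun R => nCond G R)

lemma pairs_iff {G : SimpleGraph V} {n : ℕ}
    (p : Finset (Finset (Sym2 V)) × Finset (Sym2 V)) :
    p ∈ Pairs G n ↔ p.1 ∈ RSet G ∧ p.2 ∈ FibM G p.1 n := by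
  rw [mem_Pairs, PairCond]
  simp only [RSet, FibM, Finset.mem_filter, Finset.mem_univ, true_and]
  try tauto

lemma sum_pairs {G : SimpleGraph V} (hb : G.Colorable 2) (hc : IsCactus G) (n : ℕ) :
    (∑ p ∈ Pairs G n, ((-1 : ℤ) ^ p.1.card)) =
      (((Pairs G n).filter (fun p => ¬(ActC G p).Nonempty)).card : ℤ) := by
  rw [← Finset.sum_filter_add_sum_filter_not (Pairs G n) (fun p => (ActC G p).Nonempty)]
  have hzero : (∑ p ∈ (Pairs G n).filter (fun p => (ActC G p).Nonempty),
      ((-1 : ℤ) ^ p.1.card)) = 0 := by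
    apply Finset.sum_involution (g := fun p _ => toggle G p)
    · intro p hp
      rw [Finset.mem_filter] at hp
      obtain ⟨_, _, _, hcards⟩ := toggle_spec hb hc hp.1 hp.2
      rcases hcards with h | h
      · rw [h, pow_succ]; ring
      · rw [h, pow_succ]; ring
    · intro p hp _
      rw [Finset.mem_filter] at hp
      obtain ⟨_, _, _, hcards⟩ := toggle_spec hb hc hp.1 hp.2
      intro heq
      rcases hcards with h | h <;> (rw [heq] at h; omega)
    · intro p hp
      rw [Finset.mem_filter] at hp ⊢
      obtain ⟨h1, h2, _, _⟩ := toggle_spec hb hc hp.1 hp.2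
      exact ⟨h1, by rw [h2]; exact hp.2⟩
    · intro p hp
      rw [Finset.mem_filter] at hp
      exact (toggle_spec hb hc hp.1 hp.2).2.2.1
  rw [hzero, zero_add]
  have hone : ∀ p ∈ (Pairs G n).filter (fun p => ¬(ActC G p).Nonempty),
      ((-1 : ℤ) ^ p.1.card) = 1 := by
    intro p hp
    rw [Finset.mem_filter] at hp
    have hp1 : p.1 = ∅ := by
      by_contra hne
      obtain ⟨C, hC⟩ := Finset.nonempty_iff_ne_empty.2 hne
      exact hp.2 ⟨C, mem_ActC.2 (Or.inl hC)⟩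
    rw [hp1]
    simp
  rw [Finset.sum_congr rfl hone, Finset.sum_const, nsmul_eq_mul, mul_one]

lemma mCount_eq (G : SimpleGraph V) (k : ℕ) :
    mCount G k =
      (Finset.univ.filter (fun M : Finset (Sym2 V) => IsGMatching G M ∧ M.card = k)).card := by
  rw [mCount, Nat.card_eq_fintype_card, Fintype.card_subtype]

lemma MCount_eq (G : SimpleGraph V) (k : ℕ) :
    MCount G k = (Finset.univ.filter
      (fun Wf : Finset V => ∃ M, IsGMatching G M ∧ M.card = k ∧ evF M = Wf)).card := by
  rw [MCount, ← Fintype.card_subtype, ← Nat.card_eq_fintype_card]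
  apply Nat.card_congr
  have hto : ∀ (W : {W : Set V // ∃ M, IsGMatching G M ∧ M.card = k ∧ edgeVerts M = W}),
      ∃ M, IsGMatching G M ∧ M.card = k ∧ evF M = (Set.toFinite W.1).toFinset := by
    intro W
    obtain ⟨M, h1, h2, h3⟩ := W.2
    refine ⟨M, h1, h2, ?_⟩
    ext v
    rw [Set.Finite.mem_toFinset, ← h3, edgeVerts_eq_evF, Finset.mem_coe]
  have hinv : ∀ (Wf : {Wf : Finset V // ∃ M, IsGMatching G M ∧ M.card = k ∧ evF M = Wf}),
      ∃ M, IsGMatching G M ∧ M.card = k ∧ edgeVerts M = (Wf.1 : Set V) := by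
    intro Wf
    obtain ⟨M, h1, h2, h3⟩ := Wf.2
    exact ⟨M, h1, h2, by rw [edgeVerts_eq_evF, h3]⟩
  exact
    { toFun := fun W => ⟨(Set.toFinite W.1).toFinset, hto W⟩
      invFun := fun Wf => ⟨(Wf.1 : Set V), hinv Wf⟩
      left_inv := fun W => Subtype.ext (Set.Finite.coe_toFinset _)
      right_inv := fun Wf => Subtype.ext (by
        ext v
        rw [Set.Finite.mem_toFinset]
        exact Finset.mem_coe) }

lemma fix_card {G : SimpleGraph V} (hb : G.Colorable 2) (hc : IsCactus G) (n : ℕ) :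
    ((Pairs G n).filter (fun p => ¬(ActC G p).Nonempty)).card = MCount G n := by
  rw [MCount_eq]
  have hfix : ∀ p ∈ (Pairs G n).filter (fun p => ¬(ActC G p).Nonempty),
      p.1 = ∅ ∧ IsGMatching G p.2 ∧ p.2.card = n ∧
        (∀ Cy, IsEvenCycleEdges G Cy → p.2 ∩ Cy ≠ halfOf G Cy) := by
    intro p hp
    rw [Finset.mem_filter] at hp
    obtain ⟨hP, hact⟩ := hp
    have hp1 : p.1 = ∅ := by
      by_contra hne
      obtain ⟨C, hC⟩ := Finset.nonempty_iff_ne_empty.2 hne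
      exact hact ⟨C, mem_ActC.2 (Or.inl hC)⟩
    obtain ⟨_, hM, _, hcard⟩ := mem_Pairs.1 hP
    rw [hp1] at hcard
    simp at hcard
    refine ⟨hp1, hM, hcard, ?_⟩
    intro Cy hCy heq
    exact hact ⟨Cy, mem_ActC.2 (Or.inr ⟨hCy, heq⟩)⟩
  apply Finset.card_bij (fun p _ => evF p.2)
  · intro p hp
    obtain ⟨_, hM, hcard, _⟩ := hfix p hp
    exact Finset.mem_filter.2 ⟨Finset.mem_univ _, ⟨p.2, hM, hcard, rfl⟩⟩
  · intro p₁ hp₁ p₂ hp₂ heq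
    obtain ⟨h11, h12, _, h14⟩ := hfix p₁ hp₁
    obtain ⟨h21, h22, _, h24⟩ := hfix p₂ hp₂
    have : p₁.2 = p₂.2 := no_active_unique hb hc h12 h22 heq h14 h24
    exact Prod.ext (h11.trans h21.symm) this
  · intro Wf hWf
    rw [Finset.mem_filter] at hWf
    obtain ⟨_, M₀, h1, h2, h3⟩ := hWf
    set T := Finset.univ.filter (fun M => IsGMatching G M ∧ evF M = Wf) with hT
    have hTne : T.Nonempty := ⟨M₀, Finset.mem_filter.2 ⟨Finset.mem_univ _, h1, h3⟩⟩
    obtain ⟨Mm, hMm, hminwt⟩ := Finset.exists_min_image T wt hTne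
    obtain ⟨hMmatch, hMevF⟩ := (Finset.mem_filter.1 hMm).2
    have hna : ∀ Cy, IsEvenCycleEdges G Cy → Mm ∩ Cy ≠ halfOf G Cy := by
      intro Cy hCy heq
      obtain ⟨hm', hev', hcd', hwt'⟩ := flip_wt hb hc hMmatch hCy heq
      have hmemT : (Mm \ halfOf G Cy) ∪ (Cy \ halfOf G Cy) ∈ T :=
        Finset.mem_filter.2 ⟨Finset.mem_univ _, hm', by rw [hev']; exact hMevF⟩
      have := hminwt _ hmemT
      omega
    have hMcard : Mm.card = n := by
      have e1 := matchVerts hMmatch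
      have e2 := matchVerts h1
      rw [hMevF] at e1
      rw [h3] at e2
      omega
    refine ⟨(∅, Mm), ?_, ?_⟩
    · rw [Finset.mem_filter]
      constructor
      · refine mem_Pairs.2 ⟨⟨by simp, by simp⟩, hMmatch, ?_, by simp [hMcard]⟩
        intro v _ hvsup
        rw [mem_sup_evF] at hvsup
        obtain ⟨C, hC, _⟩ := hvsup
        simp at hC
      · intro hact
        obtain ⟨C, hC⟩ := hact
        rcases mem_ActC.1 hC with h | h
        · simp at h
        · exact hna C h.1 h.2
    · exact hMevF

lemma count_identity {G : SimpleGraph V} (hb : G.Colorable 2) (hc : IsCactus G) (n : ℕ) :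
    (MCount G n : ℤ) = ∑ R ∈ RSet G, (-1 : ℤ) ^ R.card * ((FibM G R n).card : ℤ) := by
  calc (MCount G n : ℤ)
      = ∑ p ∈ Pairs G n, ((-1 : ℤ) ^ p.1.card) := by
        rw [sum_pairs hb hc n, fix_card hb hc n]
    _ = ∑ R ∈ RSet G, ∑ M ∈ FibM G R n, ((-1 : ℤ) ^ R.card) :=
        Finset.sum_finset_product _ _ _ pairs_iff
    _ = ∑ R ∈ RSet G, (-1 : ℤ) ^ R.card * ((FibM G R n).card : ℤ) := by
        apply Finset.sum_congr rfl
        intro R _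
        rw [Finset.sum_const, nsmul_eq_mul, mul_comm]

end St10


open Polynomial
open scoped Classical
set_option linter.unusedSectionVars false
set_option maxHeartbeats 1000000

namespace St10

variable {V : Type} [Fintype V] [DecidableEq V]

lemma delVerts_edge {G : SimpleGraph V} {S : Set V} {e : Sym2 V} :
    e ∈ (delVerts G S).edgeSet ↔ e ∈ G.edgeSet ∧ ∀ v ∈ e, v ∉ S := by
  induction e using Sym2.ind with
  | _ x y =>
    rw [SimpleGraph.mem_edgeSet, SimpleGraph.mem_edgeSet]
    constructor
    · intro h
      refine ⟨h.1, ?_⟩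
      intro v hv
      rcases Sym2.mem_iff.1 hv with rfl | rfl
      · exact h.2.1
      · exact h.2.2
    · intro ⟨h1, h2⟩
      exact ⟨h1, h2 x (Sym2.mem_mk_left _ _), h2 y (Sym2.mem_mk_right _ _)⟩

lemma delVerts_matching {G : SimpleGraph V} {S : Set V} {M : Finset (Sym2 V)} :
    IsGMatching (delVerts G S) M ↔ IsGMatching G M ∧ ∀ v ∈ evF M, v ∉ S := by
  constructor
  · intro h
    refine ⟨⟨fun e he => (delVerts_edge.1 (h.1 he)).1, h.2⟩, ?_⟩
    intro v hv
    obtain ⟨e, he, hve⟩ := mem_evF.1 hv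
    exact (delVerts_edge.1 (h.1 he)).2 v hve
  · intro ⟨h1, h2⟩
    refine ⟨?_, h1.2⟩
    intro e he
    refine delVerts_edge.2 ⟨h1.1 he, ?_⟩
    intro v hv
    exact h2 v (mem_evF.2 ⟨e, he, hv⟩)

lemma mCount_bound_zero {G : SimpleGraph V} {j : ℕ} (h : Fintype.card V < 2 * j) :
    mCount G j = 0 := by
  rw [mCount_eq, Finset.card_eq_zero, Finset.eq_empty_iff_forall_notMem]
  intro M hM
  rw [Finset.mem_filter] at hM
  obtain ⟨_, hmatch, hcard⟩ := hM
  have h1 := matchVerts hmatch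
  have h2 : (evF M).card ≤ Fintype.card V := Finset.card_le_univ _
  omega

lemma MCount_bound_zero {G : SimpleGraph V} {j : ℕ} (h : Fintype.card V < 2 * j) :
    MCount G j = 0 := by
  rw [MCount_eq, Finset.card_eq_zero, Finset.eq_empty_iff_forall_notMem]
  intro Wf hWf
  rw [Finset.mem_filter] at hWf
  obtain ⟨_, M, hmatch, hcard, _⟩ := hWf
  have h1 := matchVerts hmatch
  have h2 : (evF M).card ≤ Fintype.card V := Finset.card_le_univ _
  omega

lemma RSet_eq (G : SimpleGraph V) : RSet G = insert ∅ (R2' G) := by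
  apply Finset.ext
  intro R
  rw [Finset.mem_insert]
  simp only [RSet, R2', Finset.mem_filter, Finset.mem_univ, true_and]
  constructor
  · intro h
    rcases Finset.eq_empty_or_nonempty R with rfl | hne
    · exact Or.inl rfl
    · exact Or.inr ⟨hne, h.1, h.2⟩
  · rintro (rfl | ⟨_, h1, h2⟩)
    · exact ⟨by simp, by simp⟩
    · exact ⟨h1, h2⟩

lemma empty_not_mem_R2' (G : SimpleGraph V) : (∅ : Finset (Finset (Sym2 V))) ∉ R2' G := by
  simp only [R2', Finset.mem_filter, Finset.mem_univ, true_and]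
  intro h
  exact (by simp : ¬ (∅ : Finset (Finset (Sym2 V))).Nonempty) h.1

lemma FibM_empty (G : SimpleGraph V) (n : ℕ) : (FibM G ∅ n).card = mCount G n := by
  rw [mCount_eq]
  congr 1
  apply Finset.ext
  intro M
  simp only [FibM, Finset.mem_filter, Finset.mem_univ, true_and]
  constructor
  · rintro ⟨h1, _, h3⟩
    simp at h3
    exact ⟨h1, h3⟩
  · rintro ⟨h1, h2⟩
    refine ⟨h1, ?_, by simp [h2]⟩
    intro v _ hv
    rw [mem_sup_evF] at hv
    obtain ⟨C, hC, _⟩ := hv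
    simp at hC

lemma FibM_card {G : SimpleGraph V} {R : Finset (Finset (Sym2 V))} (hR : nCond G R) (n : ℕ) :
    ((FibM G R n).card : ℤ) =
      if (R.sup id).card / 2 ≤ n then
        (mCount (delVerts G (edgeVerts (R.sup id))) (n - (R.sup id).card / 2) : ℤ)
      else 0 := by
  set h := (R.sup id).card / 2 with hh
  have hsum : h = ∑ C ∈ R, C.card / 2 := sup_half_eq hR
  by_cases hle : h ≤ n
  · rw [if_pos hle, mCount_eq]
    norm_cast
    congr 1
    apply Finset.ext
    intro M
    simp only [FibM, Finset.mem_filter, Finset.mem_univ, true_and]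
    rw [delVerts_matching]
    constructor
    · rintro ⟨h1, h2, h3⟩
      refine ⟨⟨h1, ?_⟩, by omega⟩
      intro v hv
      rw [edgeVerts_eq_evF, Finset.mem_coe]
      exact h2 v hv
    · rintro ⟨⟨h1, h2⟩, h3⟩
      refine ⟨h1, ?_, by omega⟩
      intro v hv hv'
      exact h2 v hv (by rw [edgeVerts_eq_evF, Finset.mem_coe]; exact hv')
  · rw [if_neg hle]
    norm_cast
    rw [Finset.card_eq_zero, Finset.eq_empty_iff_forall_notMem]
    intro M hM
    simp only [FibM, Finset.mem_filter, Finset.mem_univ, true_and] at hM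
    omega

/-- The master counting identity, in the final form. -/
lemma final_count {G : SimpleGraph V} (hb : G.Colorable 2) (hc : IsCactus G) (k : ℕ) :
    (MCount G k : ℤ) = (mCount G k : ℤ) +
      ∑ R ∈ R2' G, (-1 : ℤ) ^ R.card *
        (if (R.sup id).card / 2 ≤ k then
          (mCount (delVerts G (edgeVerts (R.sup id))) (k - (R.sup id).card / 2) : ℤ)
         else 0) := by
  rw [count_identity hb hc k, RSet_eq G, Finset.sum_insert (empty_not_mem_R2' G)]
  congr 1
  · rw [FibM_empty]
    simp
  · apply Finset.sum_congr rfl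
    intro R hR
    have hRcond : nCond G R := by
      have := (Finset.mem_filter.1 (by rw [RSet_eq]; exact Finset.mem_insert_of_mem hR :
        R ∈ RSet G)).2
      exact this
    rw [FibM_card hRcond k]

end St10


open Polynomial
open scoped Classical
set_option linter.unusedSectionVars false
set_option maxHeartbeats 1000000

namespace St10

variable {V : Type} [Fintype V] [DecidableEq V]

lemma comp_sum (c : ℕ → ℝ) (m : ℕ) :
    (∑ j ∈ Finset.range m, C (c j) * X ^ j).comp (C 4 * X) =
      ∑ j ∈ Finset.range m, C (c j) * (C 4 * X) ^ j := by
  rw [Polynomial.comp, Polynomial.eval₂_finset_sum]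
  apply Finset.sum_congr rfl
  intro j _
  rw [show Polynomial.eval₂ C (C 4 * X) (C (c j) * X ^ j) = (C (c j) * X ^ j).comp (C 4 * X)
    from rfl]
  rw [Polynomial.mul_comp, Polynomial.C_comp, Polynomial.X_pow_comp]

lemma coeff_form (c : ℕ → ℝ) (d h k : ℕ) :
    ((∑ j ∈ Finset.range (d + 1), C (c j) * (C 4 * X) ^ j) * (C 4 * X) ^ h).coeff k =
      if h ≤ k ∧ k - h ≤ d then c (k - h) * 4 ^ k else 0 := by
  have hterm : ∀ j : ℕ, (C (c j) * (C 4 * X) ^ j) * (C 4 * X) ^ h =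
      C (c j * 4 ^ (j + h)) * X ^ (j + h) := by
    intro j
    rw [mul_assoc, ← pow_add, mul_pow, ← Polynomial.C_pow, ← mul_assoc, ← Polynomial.C_mul]
  rw [Finset.sum_mul, Finset.sum_congr rfl (fun j _ => hterm j), Polynomial.finset_sum_coeff]
  have hcoeff : ∀ j, (C (c j * 4 ^ (j + h)) * X ^ (j + h)).coeff k =
      if j + h = k then c j * 4 ^ (j + h) else 0 := by
    intro j
    rw [Polynomial.coeff_C_mul, Polynomial.coeff_X_pow]
    by_cases hj : k = j + h
    · rw [if_pos hj, if_pos hj.symm, mul_one]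
    · rw [if_neg hj, if_neg (fun hh => hj hh.symm), mul_zero]
  rw [Finset.sum_congr rfl (fun j _ => hcoeff j)]
  by_cases hcase : h ≤ k ∧ k - h ≤ d
  · rw [if_pos hcase]
    rw [Finset.sum_eq_single (k - h)]
    · have hkh : k - h + h = k := by omega
      rw [if_pos hkh, hkh]
    · intro b _ hbne
      rw [if_neg (by omega)]
    · intro habs
      exact absurd (Finset.mem_range.2 (by omega)) habs
  · rw [if_neg hcase]
    apply Finset.sum_eq_zero
    intro j hj
    rw [Finset.mem_range] at hj
    rw [if_neg (by omega)]

lemma coeff_form0 (c : ℕ → ℝ) (d k : ℕ) :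
    (∑ j ∈ Finset.range (d + 1), C (c j) * (C 4 * X) ^ j).coeff k =
      if k ≤ d then c k * 4 ^ k else 0 := by
  have h := coeff_form c d 0 k
  rw [pow_zero, mul_one] at h
  rw [h]
  simp

end St10



open St10 in
/-- For a bipartite cactus graph `G`,
`∑_k |M(G,k)| (4x)^k = g(G,4x) + ∑_{R ∈ R'_2(G)} (-1)^{c(R)} g(G-R,4x) (4x)^{|E(R)|/2}`. -/
theorem stmt10 (G : SimpleGraph V) (hb : G.Colorable 2) (hc : IsCactus G) :
    (∑ k ∈ Finset.range (Fintype.card V + 1), C ((MCount G k : ℝ)) * (C 4 * X) ^ k) =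
      (gPoly G).comp (C 4 * X) +
        ∑ R ∈ R2' G,
          C ((-1 : ℝ) ^ R.card) *
            (gPoly (delVerts G (edgeVerts (R.sup id)))).comp (C 4 * X) *
            (C 4 * X) ^ ((R.sup id).card / 2) := by
  classical
  apply Polynomial.ext
  intro k
  have hL : (∑ j ∈ Finset.range (Fintype.card V + 1),
      C ((MCount G j : ℝ)) * (C 4 * X) ^ j).coeff k = (MCount G k : ℝ) * 4 ^ k := by
    rw [coeff_form0]
    by_cases hk : k ≤ Fintype.card V
    · rw [if_pos hk]
    · rw [if_neg hk]
      have hz : MCount G k = 0 := MCount_bound_zero (by omega)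
      rw [hz]
      simp
  have hG0 : ((gPoly G).comp (C 4 * X)).coeff k = (mCount G k : ℝ) * 4 ^ k := by
    rw [gPoly, comp_sum, coeff_form0]
    by_cases hk : k ≤ Fintype.card V
    · rw [if_pos hk]
    · rw [if_neg hk]
      have hz : mCount G k = 0 := mCount_bound_zero (by omega)
      rw [hz]
      simp
  have hRterm : ∀ R : Finset (Finset (Sym2 V)),
      (C ((-1 : ℝ) ^ R.card) * (gPoly (delVerts G (edgeVerts (R.sup id)))).comp (C 4 * X) *
        (C 4 * X) ^ ((R.sup id).card / 2)).coeff k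
      = (-1 : ℝ) ^ R.card * ((if (R.sup id).card / 2 ≤ k then
          (mCount (delVerts G (edgeVerts (R.sup id))) (k - (R.sup id).card / 2) : ℝ)
          else 0) * 4 ^ k) := by
    intro R
    rw [mul_assoc, Polynomial.coeff_C_mul]
    congr 1
    rw [gPoly, comp_sum, coeff_form]
    by_cases h1 : (R.sup id).card / 2 ≤ k
    · by_cases h2 : k - (R.sup id).card / 2 ≤ Fintype.card V
      · rw [if_pos ⟨h1, h2⟩, if_pos h1]
      · rw [if_neg (by tauto), if_pos h1]
        have hz : mCount (delVerts G (edgeVerts (R.sup id))) (k - (R.sup id).card / 2) = 0 :=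
          mCount_bound_zero (by omega)
        rw [hz]
        simp
    · rw [if_neg (by tauto), if_neg h1, zero_mul]
  rw [hL, Polynomial.coeff_add, hG0, Polynomial.finset_sum_coeff,
    Finset.sum_congr rfl (fun R _ => hRterm R)]
  have key : (MCount G k : ℝ) = (mCount G k : ℝ) +
      ∑ R ∈ R2' G, (-1 : ℝ) ^ R.card * (if (R.sup id).card / 2 ≤ k then
        (mCount (delVerts G (edgeVerts (R.sup id))) (k - (R.sup id).card / 2) : ℝ) else 0) := by
    have h := final_count hb hc k
    have hcast : ∀ R : Finset (Finset (Sym2 V)),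
        (-1 : ℝ) ^ R.card * (if (R.sup id).card / 2 ≤ k then
          (mCount (delVerts G (edgeVerts (R.sup id))) (k - (R.sup id).card / 2) : ℝ) else 0)
        = (((-1 : ℤ) ^ R.card * (if (R.sup id).card / 2 ≤ k then
            (mCount (delVerts G (edgeVerts (R.sup id))) (k - (R.sup id).card / 2) : ℤ)
            else 0) : ℤ) : ℝ) := by
      intro R
      split_ifs <;> push_cast <;> ring
    rw [Finset.sum_congr rfl (fun R _ => hcast R), ← Int.cast_sum]
    rw [show ((mCount G k : ℝ)) = ((mCount G k : ℤ) : ℝ) from by push_cast; ring]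
    rw [← Int.cast_add, ← h]
    push_cast
    ring
  rw [key, add_mul, Finset.sum_mul]
  congr 1
  apply Finset.sum_congr rfl
  intro R _
  ring
end

section
/- For every integer n ≥ 3, Σ_{k≥0} m_k(C_n) · 2^{n−k} = (1+√3)^n + (1−√3)^n, where C_n is the cycle of length n; equivalently, 2^n · g(C_n, 1/2) = (1+√3)^n + (1−√3)^n. -/
open Polynomial

variable {V : Type} [Fintype V] [DecidableEq V]

open Finset


open Finset

def linS (S : Finset ℕ) : Prop := ∀ i ∈ S, i + 1 ∉ S

instance : DecidablePred linS := fun S => inferInstanceAs (Decidable (∀ i ∈ S, i + 1 ∉ S))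

def Pw (m : ℕ) : ℕ := ∑ S ∈ (Finset.range m).powerset.filter linS, 2 ^ (m - S.card)

def cycS (n : ℕ) (S : Finset ℕ) : Prop := linS S ∧ ¬(0 ∈ S ∧ n - 1 ∈ S)

instance (n : ℕ) : DecidablePred (cycS n) :=
  fun S => inferInstanceAs (Decidable (linS S ∧ ¬(0 ∈ S ∧ n - 1 ∈ S)))

def Ww (n : ℕ) : ℕ := ∑ S ∈ (Finset.range n).powerset.filter (cycS n), 2 ^ (n - S.card)

lemma Pw_zero : Pw 0 = 1 := by decide

lemma Pw_one : Pw 1 = 3 := by decide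

lemma Pw_rec (m : ℕ) : Pw (m + 2) = 2 * Pw (m + 1) + 2 * Pw m := by
  unfold Pw
  rw [← Finset.sum_filter_add_sum_filter_not ((Finset.range (m+2)).powerset.filter linS)
    (fun S => m + 1 ∈ S)]
  have h1 : ((Finset.range (m+2)).powerset.filter linS).filter (fun S => ¬ m + 1 ∈ S)
      = (Finset.range (m+1)).powerset.filter linS := by
    ext S
    simp only [mem_filter, mem_powerset]
    constructor
    · rintro ⟨⟨hsub, hlin⟩, hnot⟩
      refine ⟨fun i hi => ?_, hlin⟩
      have h := mem_range.mp (hsub hi)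
      have : i ≠ m + 1 := fun h => hnot (h ▸ hi)
      exact mem_range.mpr (by omega)
    · rintro ⟨hsub, hlin⟩
      have hnot : m + 1 ∉ S := fun h => by have := mem_range.mp (hsub h); omega
      exact ⟨⟨hsub.trans (fun i hi => mem_range.mpr (by have := mem_range.mp hi; omega)), hlin⟩,
        hnot⟩
  have h2 : ∑ S ∈ ((Finset.range (m+2)).powerset.filter linS).filter (fun S => m + 1 ∈ S),
      2 ^ (m + 2 - S.card) = ∑ S ∈ (Finset.range m).powerset.filter linS, 2 * 2 ^ (m - S.card) := by
    refine Finset.sum_nbij' (fun S => S.erase (m+1)) (fun S => insert (m+1) S) ?_ ?_ ?_ ?_ ?_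
    · intro S hS
      simp only [mem_filter, mem_powerset] at hS ⊢
      obtain ⟨⟨hsub, hlin⟩, hmem⟩ := hS
      have hm : m ∉ S := fun h => hlin m h hmem
      refine ⟨fun i hi => ?_, fun i hi hc => ?_⟩
      · rw [mem_erase] at hi
        have h := mem_range.mp (hsub hi.2)
        have : i ≠ m := fun h => hm (h ▸ hi.2)
        exact mem_range.mpr (by omega)
      · rw [mem_erase] at hi hc
        exact hlin i hi.2 hc.2
    · intro S hS
      simp only [mem_filter, mem_powerset] at hS ⊢
      obtain ⟨hsub, hlin⟩ := hS
      refine ⟨⟨?_, ?_⟩, mem_insert_self _ _⟩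
      · intro i hi
        rcases mem_insert.mp hi with h | h
        · exact mem_range.mpr (by omega)
        · exact mem_range.mpr (by have := mem_range.mp (hsub h); omega)
      · intro i hi hc
        rcases mem_insert.mp hi with h | h
        · rcases mem_insert.mp hc with h2 | h2
          · omega
          · have := mem_range.mp (hsub h2); omega
        · rcases mem_insert.mp hc with h2 | h2
          · have := mem_range.mp (hsub h); omega
          · exact hlin i h h2
    · intro S hS
      simp only [mem_filter] at hS
      exact Finset.insert_erase hS.2
    · intro S hS
      simp only [mem_filter, mem_powerset] at hS
      have : m + 1 ∉ S := fun h => by have := mem_range.mp (hS.1 h); omega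
      exact Finset.erase_insert this
    · intro S hS
      simp only [mem_filter, mem_powerset] at hS
      obtain ⟨⟨hsub, hlin⟩, hmem⟩ := hS
      have hm : m ∉ S := fun h => hlin m h hmem
      have hsub2 : S ⊆ (Finset.range (m+2)).erase m := fun i hi =>
        mem_erase.mpr ⟨fun h => hm (h ▸ hi), hsub hi⟩
      have hle : S.card ≤ m + 1 := by
        have := Finset.card_le_card hsub2
        rwa [Finset.card_erase_of_mem (mem_range.mpr (by omega)), Finset.card_range] at this
      have hcard : (S.erase (m+1)).card = S.card - 1 := Finset.card_erase_of_mem hmem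
      have hpos : 1 ≤ S.card := Finset.card_pos.mpr ⟨m+1, hmem⟩
      rw [hcard, ← pow_succ']
      congr 1
      omega
  have h3 : ∑ S ∈ (Finset.range (m+1)).powerset.filter linS, 2 ^ (m + 2 - S.card)
      = ∑ S ∈ (Finset.range (m+1)).powerset.filter linS, 2 * 2 ^ (m + 1 - S.card) := by
    refine Finset.sum_congr rfl fun S hS => ?_
    simp only [mem_filter, mem_powerset] at hS
    have : S.card ≤ m + 1 := (Finset.card_le_card hS.1).trans (by simp)
    rw [← pow_succ']
    congr 1
    omega
  rw [h1, h2, h3, ← Finset.mul_sum, ← Finset.mul_sum]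
  ring

lemma Pshift (m : ℕ) :
    ∑ T ∈ (Finset.Ico 1 (m+1)).powerset.filter linS, 2 ^ (m - T.card) = Pw m := by
  unfold Pw
  refine Finset.sum_nbij' (fun T => T.image (· - 1)) (fun S => S.image (· + 1)) ?_ ?_ ?_ ?_ ?_
  · intro T hT
    simp only [mem_filter, mem_powerset] at hT ⊢
    obtain ⟨hsub, hlin⟩ := hT
    have hge : ∀ a ∈ T, 1 ≤ a ∧ a < m + 1 := fun a ha => by
      have := mem_Ico.mp (hsub ha); omega
    constructor
    · intro i hi
      obtain ⟨a, ha, rfl⟩ := mem_image.mp hi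
      exact mem_range.mpr (by have := hge a ha; omega)
    · intro i hi hc
      obtain ⟨a, ha, rfl⟩ := mem_image.mp hi
      obtain ⟨b, hb, hab⟩ := mem_image.mp hc
      have h1 := hge a ha
      have h2 := hge b hb
      have : b = a + 1 := by omega
      exact hlin a ha (this ▸ hb)
  · intro S hS
    simp only [mem_filter, mem_powerset] at hS ⊢
    obtain ⟨hsub, hlin⟩ := hS
    constructor
    · intro i hi
      obtain ⟨a, ha, rfl⟩ := mem_image.mp hi
      exact mem_Ico.mpr (by have := mem_range.mp (hsub ha); omega)
    · intro i hi hc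
      obtain ⟨a, ha, rfl⟩ := mem_image.mp hi
      obtain ⟨b, hb, hab⟩ := mem_image.mp hc
      have : b = a + 1 := by omega
      exact hlin a ha (this ▸ hb)
  · intro T hT
    simp only [mem_filter, mem_powerset] at hT
    have hge : ∀ a ∈ T, 1 ≤ a := fun a ha => (mem_Ico.mp (hT.1 ha)).1
    rw [Finset.image_image]
    ext a
    simp only [mem_image, Function.comp]
    constructor
    · rintro ⟨b, hb, rfl⟩
      have := hge b hb
      simpa [Nat.sub_add_cancel this] using hb
    · intro ha
      exact ⟨a, ha, by have := hge a ha; omega⟩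
  · intro S hS
    rw [Finset.image_image]
    ext a
    simp only [mem_image, Function.comp]
    constructor
    · rintro ⟨b, hb, rfl⟩
      simpa using hb
    · intro ha
      exact ⟨a, ha, by omega⟩
  · intro T hT
    simp only [mem_filter, mem_powerset] at hT
    have hinj : Set.InjOn (· - 1) T := by
      intro a ha b hb hab
      have h1 := mem_Ico.mp (hT.1 ha)
      have h2 := mem_Ico.mp (hT.1 hb)
      simp only at hab
      omega
    rw [Finset.card_image_of_injOn hinj]

lemma Ww_eq (m : ℕ) : Ww (m + 3) = 2 * Pw (m + 2) + 4 * Pw m := by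
  unfold Ww
  rw [← Finset.sum_filter_add_sum_filter_not
    ((Finset.range (m+3)).powerset.filter (cycS (m+3))) (fun S => m + 2 ∈ S)]
  have h1 : ((Finset.range (m+3)).powerset.filter (cycS (m+3))).filter (fun S => ¬ m + 2 ∈ S)
      = (Finset.range (m+2)).powerset.filter linS := by
    ext S
    simp only [mem_filter, mem_powerset, cycS]
    constructor
    · rintro ⟨⟨hsub, hlin, _⟩, hnot⟩
      refine ⟨fun i hi => ?_, hlin⟩
      have h := mem_range.mp (hsub hi)
      have : i ≠ m + 2 := fun h => hnot (h ▸ hi)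
      exact mem_range.mpr (by omega)
    · rintro ⟨hsub, hlin⟩
      have hnot : m + 2 ∉ S := fun h => by have := mem_range.mp (hsub h); omega
      refine ⟨⟨hsub.trans (fun i hi => mem_range.mpr (by have := mem_range.mp hi; omega)),
        hlin, ?_⟩, hnot⟩
      rintro ⟨_, h⟩
      simp only [show m + 3 - 1 = m + 2 from rfl] at h
      exact hnot h
  have h2 : ∑ S ∈ ((Finset.range (m+3)).powerset.filter (cycS (m+3))).filter
        (fun S => m + 2 ∈ S), 2 ^ (m + 3 - S.card)
      = ∑ T ∈ (Finset.Ico 1 (m+1)).powerset.filter linS, 4 * 2 ^ (m - T.card) := by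
    refine Finset.sum_nbij' (fun S => S.erase (m+2)) (fun S => insert (m+2) S) ?_ ?_ ?_ ?_ ?_
    · intro S hS
      simp only [mem_filter, mem_powerset, cycS] at hS ⊢
      obtain ⟨⟨hsub, hlin, hwrap⟩, hmem⟩ := hS
      have hm1 : m + 1 ∉ S := fun h => hlin (m+1) h hmem
      have h0 : 0 ∉ S := fun h => hwrap ⟨h, hmem⟩
      refine ⟨fun i hi => ?_, fun i hi hc => ?_⟩
      · rw [mem_erase] at hi
        have h := mem_range.mp (hsub hi.2)
        have hne1 : i ≠ m + 1 := fun h => hm1 (h ▸ hi.2)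
        have hne0 : i ≠ 0 := fun h => h0 (h ▸ hi.2)
        exact mem_Ico.mpr (by omega)
      · rw [mem_erase] at hi hc
        exact hlin i hi.2 hc.2
    · intro S hS
      simp only [mem_filter, mem_powerset, cycS] at hS ⊢
      obtain ⟨hsub, hlin⟩ := hS
      have hB : ∀ a ∈ S, 1 ≤ a ∧ a < m + 1 := fun a ha => by
        have := mem_Ico.mp (hsub ha); omega
      refine ⟨⟨fun i hi => ?_, fun i hi hc => ?_, ?_⟩, mem_insert_self _ _⟩
      · rcases mem_insert.mp hi with h | h
        · exact mem_range.mpr (by omega)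
        · exact mem_range.mpr (by have := hB i h; omega)
      · rcases mem_insert.mp hi with h | h
        · rcases mem_insert.mp hc with h2 | h2
          · omega
          · have := hB _ h2; omega
        · rcases mem_insert.mp hc with h2 | h2
          · have := hB i h; omega
          · exact hlin i h h2
      · rintro ⟨h0, _⟩
        rcases mem_insert.mp h0 with h | h
        · omega
        · have := hB 0 h; omega
    · intro S hS
      simp only [mem_filter] at hS
      exact Finset.insert_erase hS.2
    · intro S hS
      simp only [mem_filter, mem_powerset] at hS
      have : m + 2 ∉ S := fun h => by have := mem_Ico.mp (hS.1 h); omega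
      exact Finset.erase_insert this
    · intro S hS
      simp only [mem_filter, mem_powerset, cycS] at hS
      obtain ⟨⟨hsub, hlin, hwrap⟩, hmem⟩ := hS
      have hm1 : m + 1 ∉ S := fun h => hlin (m+1) h hmem
      have h0 : 0 ∉ S := fun h => hwrap ⟨h, hmem⟩
      have hsub2 : S ⊆ ((Finset.range (m+3)).erase (m+1)).erase 0 := fun i hi => by
        refine mem_erase.mpr ⟨fun h => h0 (h ▸ hi), mem_erase.mpr ⟨fun h => hm1 (h ▸ hi), hsub hi⟩⟩
      have hle : S.card ≤ m + 1 := by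
        have hc := Finset.card_le_card hsub2
        rw [Finset.card_erase_of_mem, Finset.card_erase_of_mem (mem_range.mpr (by omega)),
          Finset.card_range] at hc
        · omega
        · exact mem_erase.mpr ⟨by omega, mem_range.mpr (by omega)⟩
      have hcard : (S.erase (m+2)).card = S.card - 1 := Finset.card_erase_of_mem hmem
      have hpos : 1 ≤ S.card := Finset.card_pos.mpr ⟨m+2, hmem⟩
      rw [hcard]
      have : m + 3 - S.card = (m - (S.card - 1)) + 2 := by omega
      rw [this, pow_add]
      ring
  rw [h1, h2]
  have h3 : ∑ S ∈ (Finset.range (m+2)).powerset.filter linS, 2 ^ (m + 3 - S.card)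
      = 2 * Pw (m+2) := by
    unfold Pw
    rw [Finset.mul_sum]
    refine Finset.sum_congr rfl fun S hS => ?_
    simp only [mem_filter, mem_powerset] at hS
    have : S.card ≤ m + 2 := (Finset.card_le_card hS.1).trans (by simp)
    rw [← pow_succ']
    congr 1
    omega
  rw [h3, ← Finset.mul_sum, Pshift]
  ring

lemma sq3_sq : Real.sqrt 3 ^ 2 = 3 := Real.sq_sqrt (by norm_num)

lemma Pw_closed (m : ℕ) : (Pw m : ℝ)
    = ((3 + 2*(Real.sqrt 3)) * (1 + (Real.sqrt 3))^m + (3 - 2*(Real.sqrt 3)) * (1 - (Real.sqrt 3))^m) / 6 := by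
  have key : ∀ m : ℕ, (Pw m : ℝ)
      = ((3 + 2*(Real.sqrt 3)) * (1 + (Real.sqrt 3))^m + (3 - 2*(Real.sqrt 3)) * (1 - (Real.sqrt 3))^m) / 6 ∧
      (Pw (m+1) : ℝ)
      = ((3 + 2*(Real.sqrt 3)) * (1 + (Real.sqrt 3))^(m+1) + (3 - 2*(Real.sqrt 3)) * (1 - (Real.sqrt 3))^(m+1)) / 6 := by
    intro m
    induction m with
    | zero =>
      constructor
      · rw [Pw_zero]; push_cast; ring
      · rw [Pw_one]; push_cast
        linear_combination (-2/3) * sq3_sq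
    | succ j ih =>
      refine ⟨ih.2, ?_⟩
      rw [Pw_rec j]
      push_cast
      rw [ih.1, ih.2]
      linear_combination (-((3 + 2*(Real.sqrt 3)) * (1 + (Real.sqrt 3))^j + (3 - 2*(Real.sqrt 3)) * (1 - (Real.sqrt 3))^j)/6) * sq3_sq
  exact (key m).1

lemma Ww_closed (m : ℕ) : (Ww (m+3) : ℝ) = (1 + (Real.sqrt 3))^(m+3) + (1 - (Real.sqrt 3))^(m+3) := by
  have hb1 : (3 + 2*(Real.sqrt 3)) * (2*(1 + (Real.sqrt 3))^2 + 4) = 6 * (1 + (Real.sqrt 3))^3 := by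
    linear_combination (-2*(Real.sqrt 3) - 4) * sq3_sq
  have hb2 : (3 - 2*(Real.sqrt 3)) * (2*(1 - (Real.sqrt 3))^2 + 4) = 6 * (1 - (Real.sqrt 3))^3 := by
    linear_combination (2*(Real.sqrt 3) - 4) * sq3_sq
  rw [Ww_eq m]
  push_cast
  rw [Pw_closed, Pw_closed]
  rw [show m + 2 = m + 2 from rfl]
  have e1 : (1 + (Real.sqrt 3))^(m+2) = (1 + (Real.sqrt 3))^m * (1 + (Real.sqrt 3))^2 := by rw [← pow_add]
  have e2 : (1 - (Real.sqrt 3))^(m+2) = (1 - (Real.sqrt 3))^m * (1 - (Real.sqrt 3))^2 := by rw [← pow_add]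
  have e3 : (1 + (Real.sqrt 3))^(m+3) = (1 + (Real.sqrt 3))^m * (1 + (Real.sqrt 3))^3 := by rw [← pow_add]
  have e4 : (1 - (Real.sqrt 3))^(m+3) = (1 - (Real.sqrt 3))^m * (1 - (Real.sqrt 3))^3 := by rw [← pow_add]
  rw [e1, e2, e3, e4]
  linear_combination ((1 + (Real.sqrt 3))^m / 6) * hb1 + ((1 - (Real.sqrt 3))^m / 6) * hb2

def phiC (m : ℕ) (i : Fin (m+3)) : Sym2 (Fin (m+3)) := Sym2.mk i (i + 1)

def cycF (m : ℕ) (S : Finset (Fin (m+3))) : Prop := ∀ i ∈ S, i + 1 ∉ S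

instance (m : ℕ) : DecidablePred (cycF m) :=
  fun S => inferInstanceAs (Decidable (∀ i ∈ S, i + 1 ∉ S))

lemma fin_succ_ne (m : ℕ) (i : Fin (m+3)) : i + 1 ≠ i := by
  intro h
  have := congrArg Fin.val h
  rcases eq_or_ne i (Fin.last (m+2)) with h2 | h2
  · rw [Fin.val_add_one, if_pos h2] at this
    subst h2
    simp [Fin.last] at this
  · rw [Fin.val_add_one, if_neg h2] at this
    omega

lemma fin_no_two_cycle (m : ℕ) (i j : Fin (m+3)) (h1 : i = j + 1) (h2 : j = i + 1) : False := by
  have : i = i + 1 + 1 := by rw [← h2, ← h1]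
  have hv := congrArg Fin.val this
  rcases eq_or_ne i (Fin.last (m+2)) with hl | hl
  · have e1 : (i + 1 : Fin (m+3)).val = 0 := by rw [Fin.val_add_one, if_pos hl]
    have e2 : (i + 1 + 1 : Fin (m+3)).val = 1 := by
      rw [Fin.val_add_one, if_neg, e1]
      intro hc
      have := congrArg Fin.val hc
      rw [e1] at this
      simp [Fin.last] at this
    rw [e2] at hv
    subst hl
    simp [Fin.last] at hv
  · have e1 : (i + 1 : Fin (m+3)).val = i.val + 1 := by rw [Fin.val_add_one, if_neg hl]
    have hlt : i.val < m + 2 := by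
      rcases Fin.lt_last_iff_ne_last.mpr hl with h
      exact h
    rcases eq_or_ne (i + 1) (Fin.last (m+2)) with hl2 | hl2
    · have e2 : (i + 1 + 1 : Fin (m+3)).val = 0 := by rw [Fin.val_add_one, if_pos hl2]
      rw [e2] at hv
      have : i.val + 1 = m + 2 := by
        have := congrArg Fin.val hl2; rw [e1] at this; simpa [Fin.last] using this
      omega
    · have e2 : (i + 1 + 1 : Fin (m+3)).val = i.val + 2 := by
        rw [Fin.val_add_one, if_neg hl2, e1]
      rw [e2] at hv
      omega

lemma phiC_inj (m : ℕ) : Function.Injective (phiC m) := by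
  intro i j h
  rw [phiC, phiC, Sym2.eq_iff] at h
  rcases h with ⟨h1, _⟩ | ⟨h1, h2⟩
  · exact h1
  · exact (fin_no_two_cycle m i j h1 h2.symm).elim

lemma phiC_mem_edgeSet (m : ℕ) (i : Fin (m+3)) :
    phiC m i ∈ (SimpleGraph.cycleGraph (m+3)).edgeSet := by
  rw [phiC, SimpleGraph.mem_edgeSet]
  have : SimpleGraph.cycleGraph (m+3) = SimpleGraph.cycleGraph (m+1+2) := rfl
  rw [this, SimpleGraph.cycleGraph_adj]
  right
  rw [add_sub_cancel_left]

lemma edgeSet_eq_range (m : ℕ) (e : Sym2 (Fin (m+3)))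
    (he : e ∈ (SimpleGraph.cycleGraph (m+3)).edgeSet) : ∃ i, phiC m i = e := by
  induction e with
  | _ u v =>
    rw [SimpleGraph.mem_edgeSet] at he
    have : SimpleGraph.cycleGraph (m+3) = SimpleGraph.cycleGraph (m+1+2) := rfl
    rw [this, SimpleGraph.cycleGraph_adj] at he
    rcases he with h | h
    · refine ⟨v, ?_⟩
      rw [phiC, Sym2.eq_iff]
      exact Or.inr ⟨rfl, (sub_eq_iff_eq_add'.mp h).symm⟩
    · refine ⟨u, ?_⟩
      rw [phiC, Sym2.eq_iff]
      exact Or.inl ⟨rfl, (sub_eq_iff_eq_add'.mp h).symm⟩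

lemma matching_image (m : ℕ) (S : Finset (Fin (m+3))) (hS : cycF m S) :
    IsGMatching (SimpleGraph.cycleGraph (m+3)) (S.image (phiC m)) := by
  constructor
  · intro e he
    rw [Finset.mem_coe, Finset.mem_image] at he
    obtain ⟨i, _, rfl⟩ := he
    exact phiC_mem_edgeSet m i
  · intro e he f hf hne v hv
    rw [Finset.mem_coe, Finset.mem_image] at he hf
    obtain ⟨i, hi, rfl⟩ := he
    obtain ⟨j, hj, rfl⟩ := hf
    have hij : i ≠ j := fun h => hne (h ▸ rfl)
    obtain ⟨hv1, hv2⟩ := hv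
    rw [phiC, Sym2.mem_iff] at hv1 hv2
    rcases hv1 with rfl | rfl
    · rcases hv2 with h | h
      · exact hij h
      · exact hS j hj (h ▸ hi)
    · rcases hv2 with h | h
      · exact hS i hi (h ▸ hj)
      · exact hij (by
          have : i + 1 = j + 1 := h
          exact add_right_cancel this)

lemma matching_preimage (m : ℕ) (M : Finset (Sym2 (Fin (m+3))))
    (hM : IsGMatching (SimpleGraph.cycleGraph (m+3)) M) :
    ∃ S : Finset (Fin (m+3)), cycF m S ∧ S.image (phiC m) = M := by
  refine ⟨univ.filter (fun i => phiC m i ∈ M), ?_, ?_⟩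
  · intro i hi hc
    rw [mem_filter] at hi hc
    have hne : phiC m i ≠ phiC m (i + 1) := fun h => fin_succ_ne m i (phiC_inj m h).symm
    exact hM.2 hi.2 hc.2 hne (i + 1) ⟨by rw [phiC, Sym2.mem_iff]; right; rfl,
      by rw [phiC, Sym2.mem_iff]; left; rfl⟩
  · ext e
    rw [Finset.mem_image]
    constructor
    · rintro ⟨i, hi, rfl⟩
      exact (mem_filter.mp hi).2
    · intro he
      obtain ⟨i, rfl⟩ := edgeSet_eq_range m e (hM.1 he)
      exact ⟨i, mem_filter.mpr ⟨mem_univ _, he⟩, rfl⟩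

lemma mCount_eq (m k : ℕ) : mCount (SimpleGraph.cycleGraph (m+3)) k
    = ((univ : Finset (Finset (Fin (m+3)))).filter (fun S => cycF m S ∧ S.card = k)).card := by
  classical
  rw [mCount]
  have hf : Function.Bijective (fun S : {S : Finset (Fin (m+3)) // cycF m S ∧ S.card = k} =>
      (⟨S.1.image (phiC m), matching_image m S.1 S.2.1,
        by rw [Finset.card_image_of_injective _ (phiC_inj m)]; exact S.2.2⟩ :
        {M : Finset (Sym2 (Fin (m+3))) // IsGMatching (SimpleGraph.cycleGraph (m+3)) M ∧
          M.card = k})) := by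
    constructor
    · rintro ⟨S, hS⟩ ⟨T, hT⟩ h
      simp only [Subtype.mk.injEq] at h
      exact Subtype.ext (Finset.image_injective (phiC_inj m) h)
    · rintro ⟨M, hM, hk⟩
      obtain ⟨S, hS, hSM⟩ := matching_preimage m M hM
      refine ⟨⟨S, hS, ?_⟩, Subtype.ext (by simpa using hSM)⟩
      rw [← hk, ← hSM, Finset.card_image_of_injective _ (phiC_inj m)]
  rw [Nat.card_congr (Equiv.ofBijective _ hf).symm, Nat.card_eq_fintype_card,
    Fintype.card_subtype]

lemma card_fin_le (m : ℕ) (S : Finset (Fin (m+3))) : S.card ≤ m + 3 := by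
  simpa using Finset.card_le_univ S

lemma sum_eq_Ww (m : ℕ) :
    ∑ k ∈ Finset.range (m+3+1), mCount (SimpleGraph.cycleGraph (m+3)) k * 2^(m+3-k)
      = Ww (m+3) := by
  have step1 : ∑ k ∈ Finset.range (m+3+1), mCount (SimpleGraph.cycleGraph (m+3)) k * 2^(m+3-k)
      = ∑ k ∈ Finset.range (m+3+1),
          ∑ S ∈ ((univ : Finset (Finset (Fin (m+3)))).filter (cycF m)).filter
            (fun S => S.card = k), 2^(m+3-S.card) := by
    refine Finset.sum_congr rfl fun k _ => ?_
    rw [mCount_eq, ← Finset.filter_filter]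
    rw [Finset.sum_congr rfl (fun S hS => by rw [(Finset.mem_filter.mp hS).2]),
      Finset.sum_const, smul_eq_mul]
  rw [step1]
  rw [Finset.sum_fiberwise_of_maps_to
    (fun S _ => Finset.mem_range.mpr (by have := card_fin_le m S; omega)) _]
  unfold Ww
  refine Finset.sum_nbij' (fun S => S.image Fin.val)
    (fun T => univ.filter (fun i : Fin (m+3) => i.val ∈ T)) ?_ ?_ ?_ ?_ ?_
  · intro S hS
    have hS' : cycF m S := (Finset.mem_filter.mp hS).2
    refine Finset.mem_filter.mpr ⟨Finset.mem_powerset.mpr ?_, ?_, ?_⟩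
    · intro a ha
      obtain ⟨i, _, rfl⟩ := Finset.mem_image.mp ha
      exact Finset.mem_range.mpr i.isLt
    · intro a ha hc
      obtain ⟨i, hi1, rfl⟩ := Finset.mem_image.mp ha
      obtain ⟨j, hj1, hj2⟩ := Finset.mem_image.mp hc
      have hilast : i ≠ Fin.last (m+2) := by
        intro h
        have : j.val = m + 3 := by rw [hj2, h]; rfl
        have := j.isLt
        omega
      have hval : (i + 1).val = i.val + 1 := by rw [Fin.val_add_one, if_neg hilast]
      have : i + 1 = j := Fin.val_injective (by rw [hval, hj2])
      exact hS' i hi1 (this ▸ hj1)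
    · rintro ⟨h0, hl⟩
      obtain ⟨i, hi1, hi2⟩ := Finset.mem_image.mp h0
      obtain ⟨j, hj1, hj2⟩ := Finset.mem_image.mp hl
      have hj : j = Fin.last (m+2) := Fin.val_injective (by rw [hj2]; rfl)
      have hval : (j + 1).val = 0 := by rw [Fin.val_add_one, if_pos hj]
      have : j + 1 = i := Fin.val_injective (by rw [hval, hi2])
      exact hS' j hj1 (this ▸ hi1)
  · intro T hT
    obtain ⟨hsub, hlin, hwrap⟩ := Finset.mem_filter.mp hT
    rw [Finset.mem_powerset] at hsub
    refine Finset.mem_filter.mpr ⟨Finset.mem_univ _, ?_⟩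
    intro i hi hc
    rw [Finset.mem_filter] at hi hc
    by_cases hilast : i = Fin.last (m+2)
    · have hv0 : (i + 1).val = 0 := by rw [Fin.val_add_one, if_pos hilast]
      have hvl : i.val = m + 2 := by rw [hilast]; rfl
      exact hwrap ⟨hv0 ▸ hc.2, by have := hi.2; rwa [hvl] at this⟩
    · have hv : (i + 1).val = i.val + 1 := by rw [Fin.val_add_one, if_neg hilast]
      exact hlin i.val hi.2 (hv ▸ hc.2)
  · intro S _
    ext x
    simp only [Finset.mem_filter, Finset.mem_univ, true_and, Finset.mem_image]
    constructor
    · rintro ⟨a, ha, hav⟩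
      rwa [← Fin.val_injective hav]
    · intro hx
      exact ⟨x, hx, rfl⟩
  · intro T hT
    obtain ⟨hsub, _⟩ := Finset.mem_filter.mp hT
    rw [Finset.mem_powerset] at hsub
    ext a
    simp only [Finset.mem_image, Finset.mem_filter, Finset.mem_univ, true_and]
    constructor
    · rintro ⟨i, hi, rfl⟩
      exact hi
    · intro ha
      have := Finset.mem_range.mp (hsub ha)
      exact ⟨⟨a, this⟩, ha, rfl⟩
  · intro S _
    rw [Finset.card_image_of_injective _ Fin.val_injective]

/-- For the cycle `C_n` (`n ≥ 3`),
`∑_k m_k(C_n) 2^{n-k} = (1+√3)^n + (1-√3)^n`; equivalently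
`2^n g(C_n, 1/2) = (1+√3)^n + (1-√3)^n`. -/
theorem stmt18 (n : ℕ) (hn : 3 ≤ n) :
    (∑ k ∈ Finset.range (n + 1), (mCount (SimpleGraph.cycleGraph n) k : ℝ) * 2 ^ (n - k)) =
        (1 + Real.sqrt 3) ^ n + (1 - Real.sqrt 3) ^ n ∧
      2 ^ n * (gPoly (SimpleGraph.cycleGraph n)).eval (1 / 2 : ℝ) =
        (1 + Real.sqrt 3) ^ n + (1 - Real.sqrt 3) ^ n := by
  obtain ⟨m, rfl⟩ : ∃ m, n = m + 3 := ⟨n - 3, by omega⟩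
  have hnat := sum_eq_Ww m
  have h1 : (∑ k ∈ Finset.range (m + 3 + 1),
      (mCount (SimpleGraph.cycleGraph (m+3)) k : ℝ) * 2 ^ (m + 3 - k))
      = (1 + Real.sqrt 3) ^ (m+3) + (1 - Real.sqrt 3) ^ (m+3) := by
    have hc := congrArg (Nat.cast : ℕ → ℝ) hnat
    push_cast at hc
    rw [hc, Ww_closed]
  refine ⟨h1, ?_⟩
  have hev : (gPoly (SimpleGraph.cycleGraph (m+3))).eval (1/2 : ℝ)
      = ∑ k ∈ Finset.range (m + 3 + 1),
          (mCount (SimpleGraph.cycleGraph (m+3)) k : ℝ) * (1/2 : ℝ)^k := by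
    rw [gPoly, Polynomial.eval_finset_sum]
    simp [Fintype.card_fin]
  rw [hev, Finset.mul_sum, ← h1]
  refine Finset.sum_congr rfl fun k hk => ?_
  have hk' : k ≤ m + 3 := by have := Finset.mem_range.mp hk; omega
  have h2 : (2:ℝ)^(m+3) = 2^(m+3-k) * 2^k := by rw [← pow_add]; congr 1; omega
  have h2k : (2:ℝ)^k ≠ 0 := by positivity
  rw [h2]
  field_simp
  have h3 : (1/2:ℝ)^k * 2^k = 1 := by rw [← mul_pow]; norm_num
  linear_combination (mCount (SimpleGraph.cycleGraph (m+3)) k : ℝ) * h3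
end
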